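/- arXiv:1404.3488 — 4 statements merged into one kernel-verified Lean document; each statement's English description precedes it below -/
import Mathlib

section
/- Write D_{𝐲}g_{ij} := Σ_l 𝐲^l ∂g_{ij}(x,𝐲)/∂x^l at x = 0, i.e. a·∂_{x^1}g_{ij}(0,𝐲) + a'·∂_{x^n}g_{ij}(0,𝐲). Then: D_{𝐲}g_{ii} = −(2a/a')L₁₁(aA₁ + a'A₂) for 1 < i ≤ n₁; D_{𝐲}g_{ii} = −(2a/a')L₁₂(aA₁ + a'A₂) for n₁ < i < n; D_{𝐲}g_{11} = (4aa'L₁₁₂ + (2a'³/a + 6aa')L₁₂)(aA₁ + a'A₂); D_{𝐲}g_{nn} = ((4a³/a')L₁₁₂ + (4a/a' − 6aa' − 2a³/a')L₁₂)(aA₁ + a'A₂); D_{𝐲}g_{1n} = (−4a²L₁₁₂ − 4a²L₁₂ + L₂ − L₁)(aA₁ + a'A₂). -/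
noncomputable section

open Matrix MeasureTheory

/-- The `i`-th standard basis vector of `ℝⁿ`. -/
def eb (n : ℕ) (i : Fin n) : Fin n → ℝ := Pi.single i 1

/-- Partial derivative of a function on `ℝⁿ` in the `i`-th coordinate direction. -/
def pd {n : ℕ} (f : (Fin n → ℝ) → ℝ) (i : Fin n) (y : Fin n → ℝ) : ℝ :=
  fderiv ℝ f y (eb n i)

/-- The fundamental tensor `g_{ij}(y) = ½ ∂²(F²)/∂yⁱ∂yʲ`. -/
def hess {n : ℕ} (F : (Fin n → ℝ) → ℝ) (y : Fin n → ℝ) :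
    Matrix (Fin n) (Fin n) ℝ :=
  Matrix.of fun i j => (1 / 2 : ℝ) * pd (pd (fun z => F z ^ 2) j) i y

/-- A Minkowski norm on `ℝⁿ`. -/
structure IsMinkowskiNorm {n : ℕ} (F : (Fin n → ℝ) → ℝ) : Prop where
  continuous : Continuous F
  pos : ∀ y : Fin n → ℝ, y ≠ 0 → 0 < F y
  zero : F 0 = 0
  homog : ∀ lam : ℝ, 0 < lam → ∀ y : Fin n → ℝ, F (lam • y) = lam * F y
  smooth : ContDiffOn ℝ (⊤ : ℕ∞) F {(0 : Fin n → ℝ)}ᶜ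
  posdef : ∀ y : Fin n → ℝ, y ≠ 0 → (hess F y).PosDef

/-- Partial derivative of a function of two real variables in the first variable. -/
def D1 (L : ℝ × ℝ → ℝ) (p : ℝ × ℝ) : ℝ := fderiv ℝ L p (1, 0)

/-- Partial derivative of a function of two real variables in the second variable. -/
def D2 (L : ℝ × ℝ → ℝ) (p : ℝ × ℝ) : ℝ := fderiv ℝ L p (0, 1)

/-- The closed first quadrant of `ℝ²` minus the origin. -/
def quadrant : Set (ℝ × ℝ) := {p : ℝ × ℝ | 0 ≤ p.1 ∧ 0 ≤ p.2 ∧ p ≠ 0}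

/-- The `(α₁,α₂)`-metric `F(x,y) = √(L(a_{ij}(x)yⁱyʲ, b_{ij}(x)yⁱyʲ))`. -/
def FF (n : ℕ) (L : ℝ × ℝ → ℝ) (am bm : (Fin n → ℝ) → Matrix (Fin n) (Fin n) ℝ)
    (x y : Fin n → ℝ) : ℝ :=
  Real.sqrt (L (∑ i, ∑ j, am x i j * y i * y j, ∑ i, ∑ j, bm x i j * y i * y j))

/-! ### Auxiliary definitions and lemmas -/

lemma fderiv2_apply (f : ℝ × ℝ → ℝ) (p : ℝ × ℝ) (u v : ℝ) :
    fderiv ℝ f p (u, v) = u * D1 f p + v * D2 f p := by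
  have h : (u, v) = u • ((1:ℝ), (0:ℝ)) + v • ((0:ℝ), (1:ℝ)) := by
    simp [Prod.ext_iff]
  rw [h, map_add, _root_.map_smul, _root_.map_smul, D1, D2, smul_eq_mul, smul_eq_mul]

lemma hasDerivAt_line {E : Type*} [NormedAddCommGroup E] [NormedSpace ℝ E]
    {f : E → ℝ} {x v : E} (hf : DifferentiableAt ℝ f x) :
    HasDerivAt (fun t : ℝ => f (x + t • v)) (fderiv ℝ f x v) 0 := by
  have hline : HasDerivAt (fun t : ℝ => x + t • v) v 0 := by
    simpa using ((hasDerivAt_id (0:ℝ)).smul_const v).const_add x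
  have hxx : x + (0:ℝ) • v = x := by simp
  have h3 : HasFDerivAt f (fderiv ℝ f (x + (0:ℝ) • v)) (x + (0:ℝ) • v) := by
    rw [hxx]; exact hf.hasFDerivAt
  have h4 := h3.comp_hasDerivAt 0 hline
  simpa [hxx, Function.comp_def] using h4

lemma fderiv_eq_of_hasDerivAt {E : Type*} [NormedAddCommGroup E] [NormedSpace ℝ E]
    {f : E → ℝ} {x v : E} {c : ℝ} (hf : DifferentiableAt ℝ f x)
    (h : HasDerivAt (fun t : ℝ => f (x + t • v)) c 0) : fderiv ℝ f x v = c :=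
  (hasDerivAt_line hf).unique h

lemma pd_eq_of_hasDerivAt {n : ℕ} {f : (Fin n → ℝ) → ℝ} {i : Fin n} {y : Fin n → ℝ} {c : ℝ}
    (hf : DifferentiableAt ℝ f y)
    (h : HasDerivAt (fun t : ℝ => f (y + t • eb n i)) c 0) : pd f i y = c :=
  fderiv_eq_of_hasDerivAt hf h

lemma hasDerivAt_line0 {E : Type*} [NormedAddCommGroup E] [NormedSpace ℝ E]
    {f : E → ℝ} {v : E} (hf : DifferentiableAt ℝ f 0) :
    HasDerivAt (fun t : ℝ => f (t • v)) (fderiv ℝ f 0 v) 0 := by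
  have := hasDerivAt_line (x := 0) (v := v) hf
  simpa using this

lemma fderiv0_eq_of_hasDerivAt {E : Type*} [NormedAddCommGroup E] [NormedSpace ℝ E]
    {f : E → ℝ} {v : E} {c : ℝ} (hf : DifferentiableAt ℝ f 0)
    (h : HasDerivAt (fun t : ℝ => f (t • v)) c 0) : fderiv ℝ f 0 v = c :=
  (hasDerivAt_line0 hf).unique h

lemma sum_two {n : ℕ} {i₀ iN : Fin n} (hne : i₀ ≠ iN) (f : Fin n → ℝ)
    (hf : ∀ l, l ≠ i₀ → l ≠ iN → f l = 0) : ∑ l, f l = f i₀ + f iN := by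
  rw [← Finset.sum_subset (Finset.subset_univ {i₀, iN})
    (fun x _ hx => hf x (by simp at hx; tauto) (by simp at hx; tauto))]
  exact Finset.sum_pair hne

lemma contDiffAt_D1 {f : ℝ × ℝ → ℝ} {p : ℝ × ℝ} (hf : ContDiffAt ℝ (⊤ : ℕ∞) f p) :
    ContDiffAt ℝ (⊤ : ℕ∞) (D1 f) p := by
  have h := hf.fderiv_right (m := (⊤ : ℕ∞)) (by simp)
  exact h.clm_apply contDiffAt_const

lemma contDiffAt_D2 {f : ℝ × ℝ → ℝ} {p : ℝ × ℝ} (hf : ContDiffAt ℝ (⊤ : ℕ∞) f p) :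
    ContDiffAt ℝ (⊤ : ℕ∞) (D2 f) p := by
  have h := hf.fderiv_right (m := (⊤ : ℕ∞)) (by simp)
  exact h.clm_apply contDiffAt_const

lemma schwarz {f : ℝ × ℝ → ℝ} {p : ℝ × ℝ} (hf : ContDiffAt ℝ (⊤ : ℕ∞) f p) :
    D1 (D2 f) p = D2 (D1 f) p := by
  have hdf : DifferentiableAt ℝ (fderiv ℝ f) p :=
    (hf.fderiv_right (m := (⊤ : ℕ∞)) (by simp)).differentiableAt (by simp)
  have h1 : ∀ w : ℝ × ℝ, fderiv ℝ (fun q => fderiv ℝ f q w) p =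
      (fderiv ℝ (fderiv ℝ f) p).flip w := by
    intro w
    have := fderiv_clm_apply (𝕜 := ℝ) hdf (differentiableAt_const w)
    simpa using this
  have hsym := hf.isSymmSndFDerivAt (by rw [minSmoothness_of_isRCLikeNormedField]; exact WithTop.coe_le_coe.2 (le_top : (2 : ℕ∞) ≤ ⊤))
  show fderiv ℝ (fun q => fderiv ℝ f q (0,1)) p (1,0)
      = fderiv ℝ (fun q => fderiv ℝ f q (1,0)) p (0,1)
  rw [h1, h1]
  simpa using hsym (1,0) (0,1)

def qf {n : ℕ} (c : Matrix (Fin n) (Fin n) ℝ) (y : Fin n → ℝ) : ℝ :=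
  ∑ i, ∑ j, c i j * y i * y j

def dq {n : ℕ} (c : Matrix (Fin n) (Fin n) ℝ) (y : Fin n → ℝ) (k : Fin n) : ℝ :=
  ∑ i, (c k i + c i k) * y i

lemma qf_line {n : ℕ} (c : Matrix (Fin n) (Fin n) ℝ) (y e : Fin n → ℝ) :
    HasDerivAt (fun t : ℝ => qf c (y + t • e))
      (∑ i, ∑ j, (c i j * e i * y j + c i j * y i * e j)) 0 := by
  simp only [qf, Pi.add_apply, Pi.smul_apply, smul_eq_mul]
  apply HasDerivAt.fun_sum
  rintro i -
  apply HasDerivAt.fun_sum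
  rintro j -
  have hi : HasDerivAt (fun t : ℝ => y i + t * e i) (e i) 0 := by
    simpa using ((hasDerivAt_id (0:ℝ)).mul_const (e i)).const_add (y i)
  have hj : HasDerivAt (fun t : ℝ => y j + t * e j) (e j) 0 := by
    simpa using ((hasDerivAt_id (0:ℝ)).mul_const (e j)).const_add (y j)
  have h := (hi.const_mul (c i j)).fun_mul hj
  refine h.congr_deriv ?_
  simp

lemma qf_line_eb {n : ℕ} (c : Matrix (Fin n) (Fin n) ℝ) (y : Fin n → ℝ) (k : Fin n) :
    HasDerivAt (fun t : ℝ => qf c (y + t • eb n k)) (dq c y k) 0 := by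
  have h := qf_line c y (eb n k)
  convert h using 1
  simp only [dq, eb, Pi.single_apply, mul_ite, ite_mul, mul_one, mul_zero, zero_mul, one_mul]
  have hsplit : ∀ x : Fin n,
      (∑ x1, ((if x = k then c x x1 * y x1 else 0) + if x1 = k then c x x1 * y x else 0))
      = (if x = k then ∑ x1, c x x1 * y x1 else 0) + c x k * y x := by
    intro x
    rw [Finset.sum_add_distrib]
    congr 1
    · split_ifs with h <;> simp
    · simp
  rw [Finset.sum_congr rfl (fun x _ => hsplit x), Finset.sum_add_distrib,
    Finset.sum_ite_eq' Finset.univ k (fun x => ∑ x1, c x x1 * y x1)]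
  simp [add_mul, Finset.sum_add_distrib]

lemma dq_line {n : ℕ} (c : Matrix (Fin n) (Fin n) ℝ) (y e : Fin n → ℝ) (j : Fin n) :
    HasDerivAt (fun t : ℝ => dq c (y + t • e) j) (dq c e j) 0 := by
  simp only [dq, Pi.add_apply, Pi.smul_apply, smul_eq_mul]
  apply HasDerivAt.fun_sum
  rintro i -
  have hi : HasDerivAt (fun t : ℝ => y i + t * e i) (e i) 0 := by
    simpa using ((hasDerivAt_id (0:ℝ)).mul_const (e i)).const_add (y i)
  simpa using hi.const_mul (c j i + c i j)

lemma qf_diffAt {n : ℕ} (c : Matrix (Fin n) (Fin n) ℝ) (y : Fin n → ℝ) :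
    DifferentiableAt ℝ (qf c) y := by
  apply DifferentiableAt.fun_sum
  rintro i -
  apply DifferentiableAt.fun_sum
  rintro j -
  exact (((ContinuousLinearMap.proj (R := ℝ) (φ := fun _ : Fin n => ℝ)
    i).differentiableAt.const_mul (c i j)).mul
    (ContinuousLinearMap.proj (R := ℝ) (φ := fun _ : Fin n => ℝ) j).differentiableAt)

lemma dq_diffAt {n : ℕ} (c : Matrix (Fin n) (Fin n) ℝ) (j : Fin n) (y : Fin n → ℝ) :
    DifferentiableAt ℝ (fun z => dq c z j) y := by
  apply DifferentiableAt.fun_sum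
  rintro i -
  exact (ContinuousLinearMap.proj (R := ℝ) (φ := fun _ : Fin n => ℝ)
    i).differentiableAt.const_mul (c j i + c i j)

lemma comp_hasDerivAt_R2 {f : ℝ × ℝ → ℝ} {P : ℝ → ℝ × ℝ} {p : ℝ × ℝ} {d : ℝ × ℝ}
    (hp : P 0 = p) (hf : DifferentiableAt ℝ f p) (hP : HasDerivAt P d 0) :
    HasDerivAt (fun t => f (P t)) (d.1 * D1 f p + d.2 * D2 f p) 0 := by
  have h3 : HasFDerivAt f (fderiv ℝ f p) (P 0) := by rw [hp]; exact hf.hasFDerivAt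
  have h4 := h3.comp_hasDerivAt 0 hP
  have h5 : fderiv ℝ f p d = d.1 * D1 f p + d.2 * D2 f p := by
    rw [← fderiv2_apply f p d.1 d.2]
  rw [← h5]
  exact h4

lemma sum_mul_eb {n : ℕ} (f : Fin n → ℝ) (i : Fin n) :
    ∑ k, f k * eb n i k = f i := by
  simp [eb, Pi.single_apply, mul_ite, Finset.sum_ite_eq']

lemma step_homog {g : ℝ × ℝ → ℝ} {Q : Set (ℝ × ℝ)} (hQ : IsOpen Q)
    (hscal : ∀ lam : ℝ, 0 < lam → ∀ p ∈ Q, lam • p ∈ Q)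
    (hg : ∀ p ∈ Q, DifferentiableAt ℝ g p) {φ : ℝ → ℝ}
    (hhom : ∀ lam : ℝ, 0 < lam → ∀ p ∈ Q, g (lam • p) = φ lam * g p) :
    ∀ lam : ℝ, 0 < lam → ∀ p ∈ Q, ∀ e : ℝ × ℝ,
      lam * fderiv ℝ g (lam • p) e = φ lam * fderiv ℝ g p e := by
  intro lam hlam p hp e
  have hmem : lam • p ∈ Q := hscal lam hlam p hp
  have h1 : HasFDerivAt (fun q : ℝ × ℝ => lam • q)
      (lam • ContinuousLinearMap.id ℝ (ℝ × ℝ)) p := by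
    exact (hasFDerivAt_id p).const_smul lam
  have h2 : HasFDerivAt (fun q => g (lam • q))
      ((fderiv ℝ g (lam • p)).comp (lam • ContinuousLinearMap.id ℝ (ℝ × ℝ))) p :=
    ((hg _ hmem).hasFDerivAt).comp p h1
  have h3 : HasFDerivAt (fun q => φ lam * g q) (φ lam • fderiv ℝ g p) p :=
    ((hg p hp).hasFDerivAt).const_mul (φ lam)
  have heq : (fun q => g (lam • q)) =ᶠ[nhds p] (fun q => φ lam * g q) :=
    Filter.eventually_of_mem (hQ.mem_nhds hp) (fun q hq => hhom lam hlam q hq)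
  have h4 : HasFDerivAt (fun q => g (lam • q)) (φ lam • fderiv ℝ g p) p :=
    h3.congr_of_eventuallyEq heq
  have h5 := h2.unique h4
  have := congrArg (fun T : (ℝ × ℝ) →L[ℝ] ℝ => T e) h5
  simpa [mul_comm] using this

lemma euler {g : ℝ × ℝ → ℝ} {p : ℝ × ℝ} (hg : DifferentiableAt ℝ g p) {φ : ℝ → ℝ} {d : ℝ}
    (hφ : HasDerivAt φ d 1)
    (heq : ∀ᶠ lam in nhds (1:ℝ), g (lam • p) = φ lam * g p) :
    p.1 * D1 g p + p.2 * D2 g p = d * g p := by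
  have hline : HasDerivAt (fun lam : ℝ => lam • p) p 1 := by
    simpa using (hasDerivAt_id (1:ℝ)).smul_const p
  have hp1 : (1:ℝ) • p = p := one_smul _ _
  have h3 : HasFDerivAt g (fderiv ℝ g ((1:ℝ) • p)) ((1:ℝ) • p) := by
    rw [hp1]; exact hg.hasFDerivAt
  have h1 : HasDerivAt (fun lam : ℝ => g (lam • p)) (fderiv ℝ g p p) 1 := by
    have h4 := h3.comp_hasDerivAt 1 hline
    simpa [hp1, Function.comp_def] using h4
  have h2 : HasDerivAt (fun lam : ℝ => φ lam * g p) (d * g p) 1 := hφ.mul_const (g p)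
  have h5 : HasDerivAt (fun lam : ℝ => g (lam • p)) (d * g p) 1 :=
    h2.congr_of_eventuallyEq heq
  have h6 := h1.unique h5
  rw [← h6]
  conv_lhs => rw [show p = (p.1, p.2) from rfl]
  rw [fderiv2_apply]
set_option maxHeartbeats 2000000 in
/-- the horizontal derivatives `D_𝐲 g_{ij} = Σ_l 𝐲ˡ ∂g_{ij}(x,𝐲)/∂xˡ |_{x=0}`
of the fundamental tensor at `𝐲 = (a,0,…,0,a')`. -/
theorem horizontal_derivative_of_hess (n₁ n₂ : ℕ) (hn₁ : 1 ≤ n₁) (hn₂ : 1 ≤ n₂)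
    (L : ℝ × ℝ → ℝ) (V : Set (ℝ × ℝ)) (hVopen : IsOpen V) (hVsub : quadrant ⊆ V)
    (hLsm : ContDiffOn ℝ (⊤ : ℕ∞) L V) (hLpos : ∀ p ∈ V, 0 < L p)
    (hLhom : ∀ lam : ℝ, 0 < lam → ∀ p ∈ quadrant, L (lam * p.1, lam * p.2) = lam * L p)
    (am bm : (Fin (n₁ + n₂) → ℝ) → Matrix (Fin (n₁ + n₂)) (Fin (n₁ + n₂)) ℝ)
    (U : Set (Fin (n₁ + n₂) → ℝ)) (hUopen : IsOpen U) (hU0 : (0 : Fin (n₁ + n₂) → ℝ) ∈ U)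
    (hasym : ∀ x, (am x).IsSymm) (hbsym : ∀ x, (bm x).IsSymm)
    (hasm : ∀ i j, ContDiffOn ℝ (⊤ : ℕ∞) (fun x => am x i j) U)
    (hbsm : ∀ i j, ContDiffOn ℝ (⊤ : ℕ∞) (fun x => bm x i j) U)
    (ha0 : ∀ i j : Fin (n₁ + n₂), am 0 i j = if i = j ∧ (i : ℕ) < n₁ then 1 else 0)
    (hb0 : ∀ i j : Fin (n₁ + n₂), bm 0 i j = if i = j ∧ n₁ ≤ (i : ℕ) then 1 else 0)
    (habd : ∀ i j k, pd (fun x => am x i j + bm x i j) k 0 = 0)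
    (hMink : ∀ x ∈ U, IsMinkowskiNorm (FF (n₁ + n₂) L am bm x))
    (hbd : ∀ i j k : Fin (n₁ + n₂),
      (((i : ℕ) < n₁ ∧ (j : ℕ) < n₁) ∨ (n₁ ≤ (i : ℕ) ∧ n₁ ≤ (j : ℕ))) →
      pd (fun x => bm x i j) k 0 = 0)
    (i₀ iN : Fin (n₁ + n₂)) (hi₀ : (i₀ : ℕ) = 0) (hiN : (iN : ℕ) = n₁ + n₂ - 1)
    (A₁ A₂ : ℝ) (hA₁ : A₁ = pd (fun x => bm x i₀ iN) i₀ 0)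
    (hA₂ : A₂ = pd (fun x => bm x i₀ iN) iN 0)
    (a a' : ℝ) (ha : a ≠ 0) (ha' : a' ≠ 0) (hnorm : a ^ 2 + a' ^ 2 = 1)
    (Y : Fin (n₁ + n₂) → ℝ)
    (hY : Y = fun i => if i = i₀ then a else if i = iN then a' else 0)
    (l1 l2 l11 l12 l112 : ℝ)
    (hl1 : l1 = D1 L (a ^ 2, a' ^ 2)) (hl2 : l2 = D2 L (a ^ 2, a' ^ 2))
    (hl11 : l11 = D1 (D1 L) (a ^ 2, a' ^ 2)) (hl12 : l12 = D2 (D1 L) (a ^ 2, a' ^ 2))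
    (hl112 : l112 = D2 (D1 (D1 L)) (a ^ 2, a' ^ 2))
    (Dg : Fin (n₁ + n₂) → Fin (n₁ + n₂) → ℝ)
    (hDg : ∀ i j, Dg i j =
      ∑ l, Y l * pd (fun x => hess (FF (n₁ + n₂) L am bm x) Y i j) l 0) :
    (∀ i : Fin (n₁ + n₂), 1 ≤ (i : ℕ) → (i : ℕ) < n₁ →
      Dg i i = -(2 * a / a') * l11 * (a * A₁ + a' * A₂)) ∧
    (∀ i : Fin (n₁ + n₂), n₁ ≤ (i : ℕ) → (i : ℕ) < n₁ + n₂ - 1 →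
      Dg i i = -(2 * a / a') * l12 * (a * A₁ + a' * A₂)) ∧
    Dg i₀ i₀ = (4 * a * a' * l112 + (2 * a' ^ 3 / a + 6 * a * a') * l12) *
      (a * A₁ + a' * A₂) ∧
    Dg iN iN = ((4 * a ^ 3 / a') * l112 +
      (4 * a / a' - 6 * a * a' - 2 * a ^ 3 / a') * l12) * (a * A₁ + a' * A₂) ∧
    Dg i₀ iN = (-(4 * a ^ 2 * l112) - 4 * a ^ 2 * l12 + l2 - l1) *
      (a * A₁ + a' * A₂) := by
  -- PART A : basic index and Y facts
  have hne : i₀ ≠ iN := by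
    intro h
    rw [h, hiN] at hi₀
    omega
  have hi₀n₁ : (i₀ : ℕ) < n₁ := by omega
  have hiNn₁ : n₁ ≤ (iN : ℕ) := by omega
  have hY0 : ∀ l, l ≠ i₀ → l ≠ iN → Y l = 0 := by
    intro l h1 h2; simp [hY, h1, h2]
  have hYi₀ : Y i₀ = a := by simp [hY]
  have hYiN : Y iN = a' := by simp [hY, (hne.symm : iN ≠ i₀)]
  have hsum2 : ∀ f : Fin (n₁ + n₂) → ℝ, (∀ l, l ≠ i₀ → l ≠ iN → f l = 0) →
      (∑ l, f l) = f i₀ + f iN := fun f hf => sum_two hne f hf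
  have hYfun : Y = a • eb (n₁ + n₂) i₀ + a' • eb (n₁ + n₂) iN := by
    funext l
    simp only [hY, Pi.add_apply, Pi.smul_apply, eb, Pi.single_apply, smul_eq_mul]
    split_ifs with h1 h2 <;> simp_all
  -- PART B : smoothness suite for L
  have hLc : ∀ q ∈ V, ContDiffAt ℝ (⊤ : ℕ∞) L q := fun q hq => hLsm.contDiffAt (hVopen.mem_nhds hq)
  have hdL : ∀ q ∈ V, DifferentiableAt ℝ L q := fun q hq => (hLc q hq).differentiableAt (by simp)
  have hcD1 : ∀ q ∈ V, ContDiffAt ℝ (⊤ : ℕ∞) (D1 L) q := fun q hq => contDiffAt_D1 (hLc q hq)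
  have hcD2 : ∀ q ∈ V, ContDiffAt ℝ (⊤ : ℕ∞) (D2 L) q := fun q hq => contDiffAt_D2 (hLc q hq)
  have hdD1 : ∀ q ∈ V, DifferentiableAt ℝ (D1 L) q :=
    fun q hq => (hcD1 q hq).differentiableAt (by simp)
  have hdD2 : ∀ q ∈ V, DifferentiableAt ℝ (D2 L) q :=
    fun q hq => (hcD2 q hq).differentiableAt (by simp)
  have hd11 : ∀ q ∈ V, DifferentiableAt ℝ (D1 (D1 L)) q :=
    fun q hq => (contDiffAt_D1 (hcD1 q hq)).differentiableAt (by simp)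
  have hd21 : ∀ q ∈ V, DifferentiableAt ℝ (D2 (D1 L)) q :=
    fun q hq => (contDiffAt_D2 (hcD1 q hq)).differentiableAt (by simp)
  have hd12 : ∀ q ∈ V, DifferentiableAt ℝ (D1 (D2 L)) q :=
    fun q hq => (contDiffAt_D1 (hcD2 q hq)).differentiableAt (by simp)
  have hd22 : ∀ q ∈ V, DifferentiableAt ℝ (D2 (D2 L)) q :=
    fun q hq => (contDiffAt_D2 (hcD2 q hq)).differentiableAt (by simp)
  -- PART C : the base point
  have ha2 : (0:ℝ) < a ^ 2 := by positivity
  have ha'2 : (0:ℝ) < a' ^ 2 := by positivity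
  have hp₀q : ((a ^ 2 : ℝ), (a' ^ 2 : ℝ)) ∈ quadrant :=
    ⟨ha2.le, ha'2.le, fun h => ha2.ne' (Prod.mk_eq_zero.1 h).1⟩
  have hp₀V : ((a ^ 2 : ℝ), (a' ^ 2 : ℝ)) ∈ V := hVsub hp₀q
  have hp₀pos : 0 < L (a ^ 2, a' ^ 2) := hLpos _ hp₀V
  -- base values of the quadratic forms
  have ea1 : am 0 i₀ i₀ = 1 := by rw [ha0]; simp [hi₀n₁]
  have ea2 : am 0 i₀ iN = 0 := by rw [ha0]; simp [hne]
  have ea3 : am 0 iN i₀ = 0 := by rw [ha0]; simp [Ne.symm hne]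
  have ea4 : am 0 iN iN = 0 := by rw [ha0, if_neg (by simp; omega)]
  have eb1 : bm 0 i₀ i₀ = 0 := by rw [hb0, if_neg (by simp; omega)]
  have eb2 : bm 0 i₀ iN = 0 := by rw [hb0]; simp [hne]
  have eb3 : bm 0 iN i₀ = 0 := by rw [hb0]; simp [Ne.symm hne]
  have eb4 : bm 0 iN iN = 1 := by rw [hb0, if_pos ⟨rfl, hiNn₁⟩]
  have hqf0 : ∀ cm : Matrix (Fin (n₁ + n₂)) (Fin (n₁ + n₂)) ℝ,
      qf cm Y = cm i₀ i₀ * a ^ 2 + (cm i₀ iN + cm iN i₀) * (a * a') + cm iN iN * a' ^ 2 := by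
    intro cm
    rw [qf, hsum2 _ (fun l hl1 hl2 => Finset.sum_eq_zero
      (fun j _ => by rw [hY0 l hl1 hl2]; ring)),
      hsum2 (fun j => cm i₀ j * Y i₀ * Y j)
        (fun l hl1 hl2 => by show cm i₀ l * Y i₀ * Y l = 0; rw [hY0 l hl1 hl2]; ring),
      hsum2 (fun j => cm iN j * Y iN * Y j)
        (fun l hl1 hl2 => by show cm iN l * Y iN * Y l = 0; rw [hY0 l hl1 hl2]; ring), hYi₀, hYiN]
    ring
  have hqa0 : qf (am 0) Y = a ^ 2 := by
    rw [hqf0, ea1, ea2, ea3, ea4]; ring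
  have hqb0 : qf (bm 0) Y = a' ^ 2 := by
    rw [hqf0, eb1, eb2, eb3, eb4]; ring
  -- PART D : neighbourhoods
  obtain ⟨u, v, hu, hv, h0u, hYv, huv⟩ :
      ∃ u v, IsOpen u ∧ IsOpen v ∧ (0 : Fin (n₁ + n₂) → ℝ) ∈ u ∧ Y ∈ v ∧
        ∀ x ∈ u, ∀ y ∈ v, x ∈ U ∧ (qf (am x) y, qf (bm x) y) ∈ V ∧
          0 < L (qf (am x) y, qf (bm x) y) := by
    have hV2 : IsOpen (V ∩ L ⁻¹' Set.Ioi 0) :=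
      hLsm.continuousOn.isOpen_inter_preimage hVopen isOpen_Ioi
    have hterm : ∀ cm : (Fin (n₁ + n₂) → ℝ) → Matrix (Fin (n₁ + n₂)) (Fin (n₁ + n₂)) ℝ,
        (∀ i j, ContDiffOn ℝ (⊤ : ℕ∞) (fun x => cm x i j) U) →
        ContinuousOn (fun z : (Fin (n₁ + n₂) → ℝ) × (Fin (n₁ + n₂) → ℝ) =>
          qf (cm z.1) z.2) (U ×ˢ (Set.univ : Set (Fin (n₁ + n₂) → ℝ))) := by
      intro cm hsm
      unfold qf
      apply continuousOn_finset_sum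
      intro i _
      apply continuousOn_finset_sum
      intro j _
      exact ((((hsm i j).continuousOn.comp continuous_fst.continuousOn
        (fun z hz => hz.1)).mul
        (((continuous_apply i).comp continuous_snd).continuousOn)).mul
        (((continuous_apply j).comp continuous_snd).continuousOn))
    have hScontOn : ContinuousOn (fun z : (Fin (n₁ + n₂) → ℝ) × (Fin (n₁ + n₂) → ℝ) =>
        ((qf (am z.1) z.2, qf (bm z.1) z.2) : ℝ × ℝ))
        (U ×ˢ (Set.univ : Set (Fin (n₁ + n₂) → ℝ))) :=
      (hterm am hasm).prodMk (hterm bm hbsm)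
    have hO : IsOpen ((U ×ˢ (Set.univ : Set (Fin (n₁ + n₂) → ℝ))) ∩
        ((fun z : (Fin (n₁ + n₂) → ℝ) × (Fin (n₁ + n₂) → ℝ) =>
          ((qf (am z.1) z.2, qf (bm z.1) z.2) : ℝ × ℝ)) ⁻¹' (V ∩ L ⁻¹' Set.Ioi 0))) :=
      hScontOn.isOpen_inter_preimage (hUopen.prod isOpen_univ) hV2
    have hmem : ((0 : Fin (n₁ + n₂) → ℝ), Y) ∈ (U ×ˢ (Set.univ : Set (Fin (n₁ + n₂) → ℝ))) ∩
        ((fun z : (Fin (n₁ + n₂) → ℝ) × (Fin (n₁ + n₂) → ℝ) =>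
          ((qf (am z.1) z.2, qf (bm z.1) z.2) : ℝ × ℝ)) ⁻¹' (V ∩ L ⁻¹' Set.Ioi 0)) := by
      refine ⟨⟨hU0, trivial⟩, ?_⟩
      simp only [Set.mem_preimage, hqa0, hqb0, Set.mem_inter_iff, Set.mem_Ioi]
      exact ⟨hp₀V, hp₀pos⟩
    obtain ⟨u, v, hu, hv, h0u, hYv, huv⟩ := isOpen_prod_iff.1 hO 0 Y hmem
    refine ⟨u, v, hu, hv, h0u, hYv, fun x hx y hy => ?_⟩
    have := huv (Set.mk_mem_prod hx hy)
    exact ⟨this.1.1, this.2.1, this.2.2⟩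
  -- PART E : first y-derivative of F²
  have hFFeq : ∀ x ∈ u, ∀ y ∈ v,
      FF (n₁ + n₂) L am bm x y ^ 2 = L (qf (am x) y, qf (bm x) y) := by
    intro x hx y hy
    have hpos := (huv x hx y hy).2.2
    have hrfl : FF (n₁ + n₂) L am bm x y = Real.sqrt (L (qf (am x) y, qf (bm x) y)) := rfl
    rw [hrfl, Real.sq_sqrt hpos.le]
  have hpairdiffy : ∀ (x y : Fin (n₁ + n₂) → ℝ), DifferentiableAt ℝ
      (fun z : Fin (n₁ + n₂) → ℝ => ((qf (am x) z, qf (bm x) z) : ℝ × ℝ)) y :=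
    fun x y => (qf_diffAt _ _).prodMk (qf_diffAt _ _)
  have h1st : ∀ x ∈ u, ∀ y ∈ v, ∀ j, pd (fun z => FF (n₁ + n₂) L am bm x z ^ 2) j y
      = dq (am x) y j * D1 L (qf (am x) y, qf (bm x) y)
        + dq (bm x) y j * D2 L (qf (am x) y, qf (bm x) y) := by
    intro x hx y hy j
    have hVm := (huv x hx y hy).2.1
    have hev : (fun z => FF (n₁ + n₂) L am bm x z ^ 2) =ᶠ[nhds y]
        (fun z => L (qf (am x) z, qf (bm x) z)) :=
      Filter.eventually_of_mem (hv.mem_nhds hy) (fun z hz => hFFeq x hx z hz)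
    have hpd : pd (fun z => FF (n₁ + n₂) L am bm x z ^ 2) j y
        = pd (fun z => L (qf (am x) z, qf (bm x) z)) j y := by
      unfold pd; rw [hev.fderiv_eq]
    rw [hpd]
    apply pd_eq_of_hasDerivAt ((hdL _ hVm).comp y (hpairdiffy x y))
    have hinner : HasDerivAt (fun t : ℝ =>
        ((qf (am x) (y + t • eb (n₁ + n₂) j), qf (bm x) (y + t • eb (n₁ + n₂) j)) : ℝ × ℝ))
        ((dq (am x) y j, dq (bm x) y j)) 0 :=
      (qf_line_eb _ _ _).prodMk (qf_line_eb _ _ _)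
    have hc := comp_hasDerivAt_R2 (by simp) (hdL _ hVm) hinner
    simpa using hc
  -- PART F : the Hessian formula
  have hhess : ∀ x ∈ u, ∀ i j : Fin (n₁ + n₂),
      hess (FF (n₁ + n₂) L am bm x) Y i j = (1/2) * (
      dq (am x) (eb (n₁ + n₂) i) j * D1 L (qf (am x) Y, qf (bm x) Y)
      + dq (am x) Y j * (dq (am x) Y i * D1 (D1 L) (qf (am x) Y, qf (bm x) Y)
          + dq (bm x) Y i * D2 (D1 L) (qf (am x) Y, qf (bm x) Y))
      + (dq (bm x) (eb (n₁ + n₂) i) j * D2 L (qf (am x) Y, qf (bm x) Y)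
      + dq (bm x) Y j * (dq (am x) Y i * D1 (D2 L) (qf (am x) Y, qf (bm x) Y)
          + dq (bm x) Y i * D2 (D2 L) (qf (am x) Y, qf (bm x) Y)))) := by
    intro x hx i j
    have hVm := (huv x hx Y hYv).2.1
    have hentry : hess (FF (n₁ + n₂) L am bm x) Y i j
        = (1/2) * pd (pd (fun z => FF (n₁ + n₂) L am bm x z ^ 2) j) i Y := rfl
    rw [hentry]
    congr 1
    have hev : (pd (fun z => FF (n₁ + n₂) L am bm x z ^ 2) j) =ᶠ[nhds Y]
        (fun y => dq (am x) y j * D1 L (qf (am x) y, qf (bm x) y)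
          + dq (bm x) y j * D2 L (qf (am x) y, qf (bm x) y)) :=
      Filter.eventually_of_mem (hv.mem_nhds hYv) (fun z hz => h1st x hx z hz j)
    have hpd2 : pd (pd (fun z => FF (n₁ + n₂) L am bm x z ^ 2) j) i Y
        = pd (fun y => dq (am x) y j * D1 L (qf (am x) y, qf (bm x) y)
          + dq (bm x) y j * D2 L (qf (am x) y, qf (bm x) y)) i Y :=
      congrArg (fun T : (Fin (n₁ + n₂) → ℝ) →L[ℝ] ℝ => T (eb (n₁ + n₂) i)) hev.fderiv_eq
    rw [hpd2]
    apply pd_eq_of_hasDerivAt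
    · exact ((dq_diffAt (am x) j Y).mul ((hdD1 _ hVm).comp Y (hpairdiffy x Y))).add
        ((dq_diffAt (bm x) j Y).mul ((hdD2 _ hVm).comp Y (hpairdiffy x Y)))
    · have hinner : HasDerivAt (fun t : ℝ =>
          ((qf (am x) (Y + t • eb (n₁ + n₂) i), qf (bm x) (Y + t • eb (n₁ + n₂) i)) : ℝ × ℝ))
          ((dq (am x) Y i, dq (bm x) Y i)) 0 :=
        (qf_line_eb _ _ _).prodMk (qf_line_eb _ _ _)
      have hB1 := comp_hasDerivAt_R2 (by simp) (hdD1 _ hVm) hinner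
      have hB2 := comp_hasDerivAt_R2 (by simp) (hdD2 _ hVm) hinner
      have hA1 := dq_line (am x) Y (eb (n₁ + n₂) i) j
      have hA2 := dq_line (bm x) Y (eb (n₁ + n₂) i) j
      have h := (hA1.fun_mul hB1).fun_add (hA2.fun_mul hB2)
      refine h.congr_deriv ?_
      simp
  -- PART G : Euler relations and Schwarz symmetry at the base point
  have hQopen : IsOpen {p : ℝ × ℝ | 0 < p.1 ∧ 0 < p.2} :=
    (isOpen_lt continuous_const continuous_fst).inter
      (isOpen_lt continuous_const continuous_snd)
  have hQsub : {p : ℝ × ℝ | 0 < p.1 ∧ 0 < p.2} ⊆ V := fun p hp =>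
    hVsub ⟨hp.1.le, hp.2.le, fun h => hp.1.ne' (congrArg Prod.fst h)⟩
  have hscal : ∀ lam : ℝ, 0 < lam → ∀ p ∈ {p : ℝ × ℝ | 0 < p.1 ∧ 0 < p.2},
      lam • p ∈ {p : ℝ × ℝ | 0 < p.1 ∧ 0 < p.2} := fun lam hl p hp =>
    ⟨by simpa [smul_eq_mul] using mul_pos hl hp.1,
     by simpa [smul_eq_mul] using mul_pos hl hp.2⟩
  have hhomQ : ∀ lam : ℝ, 0 < lam → ∀ p ∈ {p : ℝ × ℝ | 0 < p.1 ∧ 0 < p.2},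
      L (lam • p) = lam * L p := fun lam hl p hp =>
    hLhom lam hl p ⟨hp.1.le, hp.2.le, fun h => hp.1.ne' (congrArg Prod.fst h)⟩
  have hstep1 := step_homog hQopen hscal (fun p hp => hdL p (hQsub hp))
    (φ := fun lam => lam) hhomQ
  have hD1hom : ∀ lam : ℝ, 0 < lam → ∀ p ∈ {p : ℝ × ℝ | 0 < p.1 ∧ 0 < p.2},
      D1 L (lam • p) = D1 L p := fun lam hl p hp =>
    mul_left_cancel₀ hl.ne' (hstep1 lam hl p hp (1, 0))
  have hD2hom : ∀ lam : ℝ, 0 < lam → ∀ p ∈ {p : ℝ × ℝ | 0 < p.1 ∧ 0 < p.2},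
      D2 L (lam • p) = D2 L p := fun lam hl p hp =>
    mul_left_cancel₀ hl.ne' (hstep1 lam hl p hp (0, 1))
  have hstepD1 := step_homog hQopen hscal (fun p hp => hdD1 p (hQsub hp))
    (φ := fun _ => (1:ℝ)) (fun lam hl p hp => by rw [hD1hom lam hl p hp, one_mul])
  have hstepD2 := step_homog hQopen hscal (fun p hp => hdD2 p (hQsub hp))
    (φ := fun _ => (1:ℝ)) (fun lam hl p hp => by rw [hD2hom lam hl p hp, one_mul])
  have hp₀Q : ((a^2 : ℝ), (a'^2 : ℝ)) ∈ {p : ℝ × ℝ | 0 < p.1 ∧ 0 < p.2} := ⟨ha2, ha'2⟩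
  have hgt : ∀ᶠ lam in nhds (1:ℝ), 0 < lam := eventually_gt_nhds zero_lt_one
  have hinv : HasDerivAt (fun lam : ℝ => lam⁻¹) (-1) 1 := by
    simpa using hasDerivAt_inv (one_ne_zero (α := ℝ))
  have hm1 : ∀ g : ℝ × ℝ → ℝ, DifferentiableAt ℝ g (a^2, a'^2) →
      (∀ lam : ℝ, 0 < lam → g (lam • ((a^2 : ℝ), (a'^2:ℝ))) = lam⁻¹ * g (a^2, a'^2)) →
      a^2 * D1 g (a^2, a'^2) + a'^2 * D2 g (a^2, a'^2) = -1 * g (a^2, a'^2) := by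
    intro g hdg hgh
    simpa using euler hdg hinv (hgt.mono fun lam hl => hgh lam hl)
  have hm0 : ∀ g : ℝ × ℝ → ℝ, DifferentiableAt ℝ g (a^2, a'^2) →
      (∀ lam : ℝ, 0 < lam → g (lam • ((a^2 : ℝ), (a'^2:ℝ))) = g (a^2, a'^2)) →
      a^2 * D1 g (a^2, a'^2) + a'^2 * D2 g (a^2, a'^2) = 0 := by
    intro g hdg hgh
    have := euler hdg (hasDerivAt_const (1:ℝ) (1:ℝ))
      (hgt.mono fun lam hl => by rw [hgh lam hl, one_mul])
    simpa using this
  have E1 : a^2 * l11 + a'^2 * l12 = 0 := by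
    have := hm0 (D1 L) (hdD1 _ hp₀V) (fun lam hl => hD1hom lam hl _ hp₀Q)
    rw [hl11, hl12]; exact this
  have E2 : a^2 * D1 (D2 L) (a^2, a'^2) + a'^2 * D2 (D2 L) (a^2, a'^2) = 0 :=
    hm0 (D2 L) (hdD2 _ hp₀V) (fun lam hl => hD2hom lam hl _ hp₀Q)
  have E3 : a^2 * D1 (D1 (D1 L)) (a^2, a'^2) + a'^2 * l112 = -1 * l11 := by
    have := hm1 (D1 (D1 L)) (hd11 _ hp₀V) (fun lam hl =>
      (eq_inv_mul_iff_mul_eq₀ hl.ne').2 (by simpa [D1, D2] using hstepD1 lam hl _ hp₀Q (1, 0)))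
    rw [hl112, hl11]; exact this
  have E4 : a^2 * D1 (D2 (D1 L)) (a^2, a'^2) + a'^2 * D2 (D2 (D1 L)) (a^2, a'^2)
      = -1 * l12 := by
    have := hm1 (D2 (D1 L)) (hd21 _ hp₀V) (fun lam hl =>
      (eq_inv_mul_iff_mul_eq₀ hl.ne').2 (by simpa [D1, D2] using hstepD1 lam hl _ hp₀Q (0, 1)))
    rw [hl12]; exact this
  have E5 : a^2 * D1 (D2 (D2 L)) (a^2, a'^2) + a'^2 * D2 (D2 (D2 L)) (a^2, a'^2)
      = -1 * D2 (D2 L) (a^2, a'^2) :=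
    hm1 (D2 (D2 L)) (hd22 _ hp₀V) (fun lam hl =>
      (eq_inv_mul_iff_mul_eq₀ hl.ne').2 (by simpa [D1, D2] using hstepD2 lam hl _ hp₀Q (0, 1)))
  -- Schwarz
  have hsw : ∀ q ∈ V, D1 (D2 L) q = D2 (D1 L) q := fun q hq => schwarz (hLc q hq)
  have hswp : D1 (D2 L) (a^2, a'^2) = l12 := by rw [hsw _ hp₀V, ← hl12]
  have hsw1 : D1 (D2 (D1 L)) (a^2, a'^2) = l112 := by
    rw [schwarz (hcD1 _ hp₀V), ← hl112]
  have hsw2 : D1 (D2 (D2 L)) (a^2, a'^2) = D2 (D1 (D2 L)) (a^2, a'^2) :=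
    schwarz (hcD2 _ hp₀V)
  have hfun : (D1 (D2 L)) =ᶠ[nhds ((a^2 : ℝ), (a'^2 : ℝ))] (D2 (D1 L)) :=
    Filter.eventually_of_mem (hVopen.mem_nhds hp₀V) hsw
  have hQ1 : D1 (D1 (D2 L)) (a^2, a'^2) = D1 (D2 (D1 L)) (a^2, a'^2) :=
    congrArg (fun T : (ℝ × ℝ) →L[ℝ] ℝ => T (1, 0)) hfun.fderiv_eq
  have hQ2 : D2 (D1 (D2 L)) (a^2, a'^2) = D2 (D2 (D1 L)) (a^2, a'^2) :=
    congrArg (fun T : (ℝ × ℝ) →L[ℝ] ℝ => T (0, 1)) hfun.fderiv_eq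
  -- PART H : derivative in the x-direction
  have hdam : ∀ i j, DifferentiableAt ℝ (fun x => am x i j) 0 :=
    fun i j => ((hasm i j).contDiffAt (hUopen.mem_nhds hU0)).differentiableAt (by simp)
  have hdbm : ∀ i j, DifferentiableAt ℝ (fun x => bm x i j) 0 :=
    fun i j => ((hbsm i j).contDiffAt (hUopen.mem_nhds hU0)).differentiableAt (by simp)
  set da : Fin (n₁ + n₂) → Fin (n₁ + n₂) → ℝ :=
    fun i j => fderiv ℝ (fun x => am x i j) 0 Y with hda_def
  set db : Fin (n₁ + n₂) → Fin (n₁ + n₂) → ℝ :=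
    fun i j => fderiv ℝ (fun x => bm x i j) 0 Y with hdb_def
  have hamline : ∀ i j, HasDerivAt (fun c : ℝ => am (c • Y) i j) (da i j) 0 := by
    intro i j
    simp only [hda_def]
    exact hasDerivAt_line0 (hdam i j)
  have hbmline : ∀ i j, HasDerivAt (fun c : ℝ => bm (c • Y) i j) (db i j) 0 := by
    intro i j
    simp only [hdb_def]
    exact hasDerivAt_line0 (hdbm i j)
  set Ds : ℝ := ∑ i, ∑ j, da i j * Y i * Y j with hDs_def
  set Dt : ℝ := ∑ i, ∑ j, db i j * Y i * Y j with hDt_def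
  have hqaline : HasDerivAt (fun c : ℝ => qf (am (c • Y)) Y) Ds 0 := by
    rw [hDs_def]
    simp only [qf]
    apply HasDerivAt.fun_sum
    rintro i -
    apply HasDerivAt.fun_sum
    rintro j -
    exact ((hamline i j).mul_const (Y i)).mul_const (Y j)
  have hqbline : HasDerivAt (fun c : ℝ => qf (bm (c • Y)) Y) Dt 0 := by
    rw [hDt_def]
    simp only [qf]
    apply HasDerivAt.fun_sum
    rintro i -
    apply HasDerivAt.fun_sum
    rintro j -
    exact ((hbmline i j).mul_const (Y i)).mul_const (Y j)
  have hdqaline : ∀ (w : Fin (n₁ + n₂) → ℝ) (i : Fin (n₁ + n₂)),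
      HasDerivAt (fun c : ℝ => dq (am (c • Y)) w i) (∑ k, (da i k + da k i) * w k) 0 := by
    intro w i
    simp only [dq]
    apply HasDerivAt.fun_sum
    rintro k -
    exact ((hamline i k).add (hamline k i)).mul_const (w k)
  have hdqbline : ∀ (w : Fin (n₁ + n₂) → ℝ) (i : Fin (n₁ + n₂)),
      HasDerivAt (fun c : ℝ => dq (bm (c • Y)) w i) (∑ k, (db i k + db k i) * w k) 0 := by
    intro w i
    simp only [dq]
    apply HasDerivAt.fun_sum
    rintro k -
    exact ((hbmline i k).add (hbmline k i)).mul_const (w k)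
  have hpairline : HasDerivAt (fun c : ℝ =>
      ((qf (am (c • Y)) Y, qf (bm (c • Y)) Y) : ℝ × ℝ)) ((Ds, Dt)) 0 :=
    hqaline.prodMk hqbline
  have hP0 : (fun c : ℝ => ((qf (am (c • Y)) Y, qf (bm (c • Y)) Y) : ℝ × ℝ)) 0
      = ((a^2 : ℝ), (a'^2 : ℝ)) := by
    simp only [zero_smul, hqa0, hqb0]
  have hwline : ∀ g : ℝ × ℝ → ℝ, DifferentiableAt ℝ g ((a^2 : ℝ), (a'^2 : ℝ)) →
      HasDerivAt (fun c : ℝ => g (qf (am (c • Y)) Y, qf (bm (c • Y)) Y))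
        (Ds * D1 g (a^2, a'^2) + Dt * D2 g (a^2, a'^2)) 0 :=
    fun g hg => comp_hasDerivAt_R2 hP0 hg hpairline
  -- differentiability in x at 0
  have hdqf_xa : DifferentiableAt ℝ (fun x => qf (am x) Y) 0 := by
    simp only [qf]
    apply DifferentiableAt.fun_sum
    rintro i -
    apply DifferentiableAt.fun_sum
    rintro j -
    exact ((hdam i j).mul_const (Y i)).mul_const (Y j)
  have hdqf_xb : DifferentiableAt ℝ (fun x => qf (bm x) Y) 0 := by
    simp only [qf]
    apply DifferentiableAt.fun_sum
    rintro i -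
    apply DifferentiableAt.fun_sum
    rintro j -
    exact ((hdbm i j).mul_const (Y i)).mul_const (Y j)
  have hpair_x : DifferentiableAt ℝ
      (fun x => ((qf (am x) Y, qf (bm x) Y) : ℝ × ℝ)) 0 := hdqf_xa.prodMk hdqf_xb
  have hg_x : ∀ g : ℝ × ℝ → ℝ, DifferentiableAt ℝ g ((a^2 : ℝ), (a'^2 : ℝ)) →
      DifferentiableAt ℝ (fun x => g (qf (am x) Y, qf (bm x) Y)) 0 := by
    intro g hg
    refine DifferentiableAt.comp 0 ?_ hpair_x
    rw [hqa0, hqb0]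
    exact hg
  have hdq_xa : ∀ (w : Fin (n₁ + n₂) → ℝ) (i : Fin (n₁ + n₂)),
      DifferentiableAt ℝ (fun x => dq (am x) w i) 0 := by
    intro w i
    simp only [dq]
    apply DifferentiableAt.fun_sum
    rintro k -
    exact ((hdam i k).add (hdam k i)).mul_const (w k)
  have hdq_xb : ∀ (w : Fin (n₁ + n₂) → ℝ) (i : Fin (n₁ + n₂)),
      DifferentiableAt ℝ (fun x => dq (bm x) w i) 0 := by
    intro w i
    simp only [dq]
    apply DifferentiableAt.fun_sum
    rintro k -
    exact ((hdbm i k).add (hdbm k i)).mul_const (w k)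
  have hlin : ∀ T : (Fin (n₁ + n₂) → ℝ) →L[ℝ] ℝ,
      a * T (eb (n₁ + n₂) i₀) + a' * T (eb (n₁ + n₂) iN) = T Y := by
    intro T
    conv_rhs => rw [hYfun]
    rw [map_add, _root_.map_smul, _root_.map_smul]
    simp [smul_eq_mul]
  -- the master formula
  have master : ∀ i j : Fin (n₁ + n₂), Dg i j = (1/2) * (
      (∑ k, (da j k + da k j) * eb (n₁ + n₂) i  k) * D1 L (a^2, a'^2)
      + dq (am 0) (eb (n₁ + n₂) i) j * (Ds * D1 (D1 L) (a^2, a'^2) + Dt * D2 (D1 L) (a^2, a'^2))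
      + (∑ k, (da j k + da k j) * Y k) * (dq (am 0) Y i * D1 (D1 L) (a^2, a'^2) + dq (bm 0) Y i * D2 (D1 L) (a^2, a'^2))
      + dq (am 0) Y j * ((∑ k, (da i k + da k i) * Y k) * D1 (D1 L) (a^2, a'^2) + dq (am 0) Y i * (Ds * D1 (D1 (D1 L)) (a^2, a'^2) + Dt * D2 (D1 (D1 L)) (a^2, a'^2)) + (∑ k, (db i k + db k i) * Y k) * D2 (D1 L) (a^2, a'^2) + dq (bm 0) Y i * (Ds * D1 (D2 (D1 L)) (a^2, a'^2) + Dt * D2 (D2 (D1 L)) (a^2, a'^2)))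
      + (∑ k, (db j k + db k j) * eb (n₁ + n₂) i  k) * D2 L (a^2, a'^2)
      + dq (bm 0) (eb (n₁ + n₂) i) j * (Ds * D1 (D2 L) (a^2, a'^2) + Dt * D2 (D2 L) (a^2, a'^2))
      + (∑ k, (db j k + db k j) * Y k) * (dq (am 0) Y i * D1 (D2 L) (a^2, a'^2) + dq (bm 0) Y i * D2 (D2 L) (a^2, a'^2))
      + dq (bm 0) Y j * ((∑ k, (da i k + da k i) * Y k) * D1 (D2 L) (a^2, a'^2) + dq (am 0) Y i * (Ds * D1 (D1 (D2 L)) (a^2, a'^2) + Dt * D2 (D1 (D2 L)) (a^2, a'^2)) + (∑ k, (db i k + db k i) * Y k) * D2 (D2 L) (a^2, a'^2) + dq (bm 0) Y i * (Ds * D1 (D2 (D2 L)) (a^2, a'^2) + Dt * D2 (D2 (D2 L)) (a^2, a'^2)))) := by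
    intro i j
    have hGdiff : DifferentiableAt ℝ (fun x => (1/2) * (
        dq (am x) (eb (n₁ + n₂) i) j * D1 L (qf (am x) Y, qf (bm x) Y)
        + dq (am x) Y j * (dq (am x) Y i * D1 (D1 L) (qf (am x) Y, qf (bm x) Y)
            + dq (bm x) Y i * D2 (D1 L) (qf (am x) Y, qf (bm x) Y))
        + (dq (bm x) (eb (n₁ + n₂) i) j * D2 L (qf (am x) Y, qf (bm x) Y)
        + dq (bm x) Y j * (dq (am x) Y i * D1 (D2 L) (qf (am x) Y, qf (bm x) Y)
            + dq (bm x) Y i * D2 (D2 L) (qf (am x) Y, qf (bm x) Y))))) 0 := by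
      apply DifferentiableAt.const_mul
      exact (((hdq_xa (eb (n₁ + n₂) i) j).mul (hg_x (D1 L) (hdD1 _ hp₀V))).add
        ((hdq_xa Y j).mul (((hdq_xa Y i).mul (hg_x (D1 (D1 L)) (hd11 _ hp₀V))).add
          ((hdq_xb Y i).mul (hg_x (D2 (D1 L)) (hd21 _ hp₀V)))))).add
        ((((hdq_xb (eb (n₁ + n₂) i) j).mul (hg_x (D2 L) (hdD2 _ hp₀V))).add
        ((hdq_xb Y j).mul (((hdq_xa Y i).mul (hg_x (D1 (D2 L)) (hd12 _ hp₀V))).add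
          ((hdq_xb Y i).mul (hg_x (D2 (D2 L)) (hd22 _ hp₀V)))))))
    have hbig : HasDerivAt (fun c : ℝ => (1/2) * (
        dq (am (c • Y)) (eb (n₁ + n₂) i) j * D1 L (qf (am (c • Y)) Y, qf (bm (c • Y)) Y)
        + dq (am (c • Y)) Y j * (dq (am (c • Y)) Y i * D1 (D1 L) (qf (am (c • Y)) Y, qf (bm (c • Y)) Y)
            + dq (bm (c • Y)) Y i * D2 (D1 L) (qf (am (c • Y)) Y, qf (bm (c • Y)) Y))
        + (dq (bm (c • Y)) (eb (n₁ + n₂) i) j * D2 L (qf (am (c • Y)) Y, qf (bm (c • Y)) Y)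
        + dq (bm (c • Y)) Y j * (dq (am (c • Y)) Y i * D1 (D2 L) (qf (am (c • Y)) Y, qf (bm (c • Y)) Y)
            + dq (bm (c • Y)) Y i * D2 (D2 L) (qf (am (c • Y)) Y, qf (bm (c • Y)) Y)))))
        ((1/2) * (
      (∑ k, (da j k + da k j) * eb (n₁ + n₂) i  k) * D1 L (a^2, a'^2)
      + dq (am 0) (eb (n₁ + n₂) i) j * (Ds * D1 (D1 L) (a^2, a'^2) + Dt * D2 (D1 L) (a^2, a'^2))
      + (∑ k, (da j k + da k j) * Y k) * (dq (am 0) Y i * D1 (D1 L) (a^2, a'^2) + dq (bm 0) Y i * D2 (D1 L) (a^2, a'^2))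
      + dq (am 0) Y j * ((∑ k, (da i k + da k i) * Y k) * D1 (D1 L) (a^2, a'^2) + dq (am 0) Y i * (Ds * D1 (D1 (D1 L)) (a^2, a'^2) + Dt * D2 (D1 (D1 L)) (a^2, a'^2)) + (∑ k, (db i k + db k i) * Y k) * D2 (D1 L) (a^2, a'^2) + dq (bm 0) Y i * (Ds * D1 (D2 (D1 L)) (a^2, a'^2) + Dt * D2 (D2 (D1 L)) (a^2, a'^2)))
      + (∑ k, (db j k + db k j) * eb (n₁ + n₂) i  k) * D2 L (a^2, a'^2)
      + dq (bm 0) (eb (n₁ + n₂) i) j * (Ds * D1 (D2 L) (a^2, a'^2) + Dt * D2 (D2 L) (a^2, a'^2))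
      + (∑ k, (db j k + db k j) * Y k) * (dq (am 0) Y i * D1 (D2 L) (a^2, a'^2) + dq (bm 0) Y i * D2 (D2 L) (a^2, a'^2))
      + dq (bm 0) Y j * ((∑ k, (da i k + da k i) * Y k) * D1 (D2 L) (a^2, a'^2) + dq (am 0) Y i * (Ds * D1 (D1 (D2 L)) (a^2, a'^2) + Dt * D2 (D1 (D2 L)) (a^2, a'^2)) + (∑ k, (db i k + db k i) * Y k) * D2 (D2 L) (a^2, a'^2) + dq (bm 0) Y i * (Ds * D1 (D2 (D2 L)) (a^2, a'^2) + Dt * D2 (D2 (D2 L)) (a^2, a'^2))))) 0 := by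
      apply HasDerivAt.const_mul
      have h1 := (hdqaline (eb (n₁ + n₂) i) j).fun_mul (hwline (D1 L) (hdD1 _ hp₀V))
      have h2 := (hdqaline Y j).fun_mul
        (((hdqaline Y i).fun_mul (hwline (D1 (D1 L)) (hd11 _ hp₀V))).fun_add
          ((hdqbline Y i).fun_mul (hwline (D2 (D1 L)) (hd21 _ hp₀V))))
      have h3 := (hdqbline (eb (n₁ + n₂) i) j).fun_mul (hwline (D2 L) (hdD2 _ hp₀V))
      have h4 := (hdqbline Y j).fun_mul
        (((hdqaline Y i).fun_mul (hwline (D1 (D2 L)) (hd12 _ hp₀V))).fun_add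
          ((hdqbline Y i).fun_mul (hwline (D2 (D2 L)) (hd22 _ hp₀V))))
      have h := (h1.fun_add h2).fun_add (h3.fun_add h4)
      refine h.congr_deriv ?_
      simp only [zero_smul, hqa0, hqb0]
      ring
    rw [hDg i j]
    rw [hsum2 _ (fun l hl1 hl2 => by simp only [hY0 l hl1 hl2, zero_mul])]
    rw [hYi₀, hYiN]
    have hfe : (fun x => hess (FF (n₁ + n₂) L am bm x) Y i j) =ᶠ[nhds 0]
        (fun x => (1/2) * (
        dq (am x) (eb (n₁ + n₂) i) j * D1 L (qf (am x) Y, qf (bm x) Y)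
        + dq (am x) Y j * (dq (am x) Y i * D1 (D1 L) (qf (am x) Y, qf (bm x) Y)
            + dq (bm x) Y i * D2 (D1 L) (qf (am x) Y, qf (bm x) Y))
        + (dq (bm x) (eb (n₁ + n₂) i) j * D2 L (qf (am x) Y, qf (bm x) Y)
        + dq (bm x) Y j * (dq (am x) Y i * D1 (D2 L) (qf (am x) Y, qf (bm x) Y)
            + dq (bm x) Y i * D2 (D2 L) (qf (am x) Y, qf (bm x) Y))))) :=
      Filter.eventually_of_mem (hu.mem_nhds h0u) (fun x hx => hhess x hx i j)
    have hfd := hfe.fderiv_eq (𝕜 := ℝ)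
    have hpdi : pd (fun x => hess (FF (n₁ + n₂) L am bm x) Y i j) i₀ 0
        = (fderiv ℝ (fun x => (1/2) * (
        dq (am x) (eb (n₁ + n₂) i) j * D1 L (qf (am x) Y, qf (bm x) Y)
        + dq (am x) Y j * (dq (am x) Y i * D1 (D1 L) (qf (am x) Y, qf (bm x) Y)
            + dq (bm x) Y i * D2 (D1 L) (qf (am x) Y, qf (bm x) Y))
        + (dq (bm x) (eb (n₁ + n₂) i) j * D2 L (qf (am x) Y, qf (bm x) Y)
        + dq (bm x) Y j * (dq (am x) Y i * D1 (D2 L) (qf (am x) Y, qf (bm x) Y)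
            + dq (bm x) Y i * D2 (D2 L) (qf (am x) Y, qf (bm x) Y))))) 0) (eb (n₁ + n₂) i₀) :=
      congrArg (fun T : (Fin (n₁ + n₂) → ℝ) →L[ℝ] ℝ => T (eb (n₁ + n₂) i₀)) hfd
    have hpdN : pd (fun x => hess (FF (n₁ + n₂) L am bm x) Y i j) iN 0
        = (fderiv ℝ (fun x => (1/2) * (
        dq (am x) (eb (n₁ + n₂) i) j * D1 L (qf (am x) Y, qf (bm x) Y)
        + dq (am x) Y j * (dq (am x) Y i * D1 (D1 L) (qf (am x) Y, qf (bm x) Y)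
            + dq (bm x) Y i * D2 (D1 L) (qf (am x) Y, qf (bm x) Y))
        + (dq (bm x) (eb (n₁ + n₂) i) j * D2 L (qf (am x) Y, qf (bm x) Y)
        + dq (bm x) Y j * (dq (am x) Y i * D1 (D2 L) (qf (am x) Y, qf (bm x) Y)
            + dq (bm x) Y i * D2 (D2 L) (qf (am x) Y, qf (bm x) Y))))) 0) (eb (n₁ + n₂) iN) :=
      congrArg (fun T : (Fin (n₁ + n₂) → ℝ) →L[ℝ] ℝ => T (eb (n₁ + n₂) iN)) hfd
    rw [hpdi, hpdN, hlin]
    exact fderiv0_eq_of_hasDerivAt hGdiff hbig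
  -- PART I : numeric evaluation
  have hqf0' : ∀ cm : Fin (n₁ + n₂) → Fin (n₁ + n₂) → ℝ,
      (∑ i, ∑ j, cm i j * Y i * Y j)
      = cm i₀ i₀ * a ^ 2 + (cm i₀ iN + cm iN i₀) * (a * a') + cm iN iN * a' ^ 2 := by
    intro cm
    rw [hsum2 _ (fun l hl1 hl2 => Finset.sum_eq_zero
      (fun j _ => by rw [hY0 l hl1 hl2]; ring)),
      hsum2 (fun j => cm i₀ j * Y i₀ * Y j)
        (fun l hl1 hl2 => by show cm i₀ l * Y i₀ * Y l = 0; rw [hY0 l hl1 hl2]; ring),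
      hsum2 (fun j => cm iN j * Y iN * Y j)
        (fun l hl1 hl2 => by show cm iN l * Y iN * Y l = 0; rw [hY0 l hl1 hl2]; ring),
      hYi₀, hYiN]
    ring
  have hsumYd : ∀ (c : Fin (n₁ + n₂) → Fin (n₁ + n₂) → ℝ) (i : Fin (n₁ + n₂)),
      (∑ k, (c i k + c k i) * Y k) = (c i i₀ + c i₀ i) * a + (c i iN + c iN i) * a' := by
    intro c i
    rw [hsum2 _ (fun l h1 h2 => by simp only [hY0 l h1 h2, mul_zero]), hYi₀, hYiN]
  have hdqY : ∀ (c : Matrix (Fin (n₁ + n₂)) (Fin (n₁ + n₂)) ℝ) (k : Fin (n₁ + n₂)),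
      dq c Y k = (c k i₀ + c i₀ k) * a + (c k iN + c iN k) * a' := by
    intro c k
    rw [dq, hsum2 _ (fun l h1 h2 => by simp only [hY0 l h1 h2, mul_zero]), hYi₀, hYiN]
  have hdqeb : ∀ (c : Matrix (Fin (n₁ + n₂)) (Fin (n₁ + n₂)) ℝ) (i j : Fin (n₁ + n₂)),
      dq c (eb (n₁ + n₂) i) j = c j i + c i j := by
    intro c i j
    rw [dq]
    exact sum_mul_eb (fun k => c j k + c k j) i
  have hdab : ∀ i j, da i j = - db i j := by
    intro i j
    have h1 : fderiv ℝ (fun x => am x i j + bm x i j) 0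
        = fderiv ℝ (fun x => am x i j) 0 + fderiv ℝ (fun x => bm x i j) 0 :=
      fderiv_add (hdam i j) (hdbm i j)
    have h2 : (fderiv ℝ (fun x => am x i j + bm x i j) 0) Y = da i j + db i j := by
      rw [h1]
      simp only [ContinuousLinearMap.add_apply, hda_def, hdb_def]
    have h3 : (fderiv ℝ (fun x => am x i j + bm x i j) 0) Y = 0 := by
      rw [← hlin (fderiv ℝ (fun x => am x i j + bm x i j) 0)]
      have e1 : (fderiv ℝ (fun x => am x i j + bm x i j) 0) (eb (n₁ + n₂) i₀) = 0 :=
        habd i j i₀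
      have e2 : (fderiv ℝ (fun x => am x i j + bm x i j) 0) (eb (n₁ + n₂) iN) = 0 :=
        habd i j iN
      rw [e1, e2]; ring
    have := h2.symm.trans h3
    linarith
  have hdb0 : ∀ i j : Fin (n₁ + n₂),
      (((i : ℕ) < n₁ ∧ (j : ℕ) < n₁) ∨ (n₁ ≤ (i : ℕ) ∧ n₁ ≤ (j : ℕ))) → db i j = 0 := by
    intro i j hij
    simp only [hdb_def]
    rw [← hlin (fderiv ℝ (fun x => bm x i j) 0)]
    have e1 : (fderiv ℝ (fun x => bm x i j) 0) (eb (n₁ + n₂) i₀) = 0 := hbd i j i₀ hij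
    have e2 : (fderiv ℝ (fun x => bm x i j) 0) (eb (n₁ + n₂) iN) = 0 := hbd i j iN hij
    rw [e1, e2]; ring
  have hdbii : ∀ i : Fin (n₁ + n₂), db i i = 0 := by
    intro i
    rcases lt_or_ge ((i : ℕ)) n₁ with h | h
    · exact hdb0 i i (Or.inl ⟨h, h⟩)
    · exact hdb0 i i (Or.inr ⟨h, h⟩)
  have hdbC : db i₀ iN = a * A₁ + a' * A₂ := by
    simp only [hdb_def]
    rw [← hlin (fderiv ℝ (fun x => bm x i₀ iN) 0), hA₁, hA₂]
    rfl
  have hdbsym : ∀ i j, db i j = db j i := by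
    intro i j
    have hfeq : (fun x => bm x i j) = (fun x => bm x j i) :=
      funext fun x => (hbsym x).apply j i
    simp only [hdb_def]
    rw [hfeq]
  have hdbC2 : db iN i₀ = a * A₁ + a' * A₂ := by rw [hdbsym iN i₀]; exact hdbC
  have hDs_val : Ds = -((a * A₁ + a' * A₂) * (2 * a * a')) := by
    rw [hDs_def, hqf0' da, hdab i₀ i₀, hdab i₀ iN, hdab iN i₀, hdab iN iN,
      hdbii i₀, hdbii iN, hdbC, hdbC2]
    ring
  have hDt_val : Dt = (a * A₁ + a' * A₂) * (2 * a * a') := by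
    rw [hDt_def, hqf0' db, hdbii i₀, hdbii iN, hdbC, hdbC2]
    ring
  have ham0od : ∀ i j : Fin (n₁ + n₂), i ≠ j → am 0 i j = 0 := by
    intro i j h; rw [ha0, if_neg (by simp [h])]
  have ham0d1 : ∀ i : Fin (n₁ + n₂), (i : ℕ) < n₁ → am 0 i i = 1 := by
    intro i h; rw [ha0, if_pos ⟨rfl, h⟩]
  have ham0d2 : ∀ i : Fin (n₁ + n₂), n₁ ≤ (i : ℕ) → am 0 i i = 0 := by
    intro i h; rw [ha0, if_neg (by simp; omega)]
  have hbm0od : ∀ i j : Fin (n₁ + n₂), i ≠ j → bm 0 i j = 0 := by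
    intro i j h; rw [hb0, if_neg (by simp [h])]
  have hbm0d1 : ∀ i : Fin (n₁ + n₂), n₁ ≤ (i : ℕ) → bm 0 i i = 1 := by
    intro i h; rw [hb0, if_pos ⟨rfl, h⟩]
  have hbm0d2 : ∀ i : Fin (n₁ + n₂), (i : ℕ) < n₁ → bm 0 i i = 0 := by
    intro i h; rw [hb0, if_neg (by simp; omega)]
  have E2' : a ^ 2 * l12 + a' ^ 2 * D2 (D2 L) (a ^ 2, a' ^ 2) = 0 := by
    rw [hswp] at E2; exact E2
  have E4' : a ^ 2 * l112 + a' ^ 2 * D2 (D2 (D1 L)) (a ^ 2, a' ^ 2) = -1 * l12 := by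
    rw [hsw1] at E4; exact E4
  have E5' : a ^ 2 * D2 (D2 (D1 L)) (a ^ 2, a' ^ 2)
      + a' ^ 2 * D2 (D2 (D2 L)) (a ^ 2, a' ^ 2) = -1 * D2 (D2 L) (a ^ 2, a' ^ 2) := by
    rw [hsw2, hQ2] at E5; exact E5
  clear hhess h1st hFFeq huv hlin hwline hpairline hdqaline hdqbline hqaline hqbline
  refine ⟨?_, ?_, ?_, ?_, ?_⟩
  · -- case 1 : 1 ≤ i < n₁
    intro i h1 h2
    have hii₀ : i ≠ i₀ := by intro h; rw [h] at h1; omega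
    have hiiN : i ≠ iN := by intro h; rw [h] at h2; omega
    rw [master i i, hdqeb (am 0) i i, hdqeb (bm 0) i i,
      sum_mul_eb (fun k => da i k + da k i) i, sum_mul_eb (fun k => db i k + db k i) i,
      hdqY (am 0) i, hdqY (bm 0) i, hsumYd da i, hsumYd db i, hDs_val, hDt_val,
      ham0d1 i h2, hbm0d2 i h2,
      ham0od i i₀ hii₀, ham0od i₀ i (Ne.symm hii₀),
      ham0od i iN hiiN, ham0od iN i (Ne.symm hiiN),
      hbm0od i i₀ hii₀, hbm0od i₀ i (Ne.symm hii₀),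
      hbm0od i iN hiiN, hbm0od iN i (Ne.symm hiiN),
      hdab i i, hdbii i]
    simp only [hswp, hQ1, hsw1, hsw2, hQ2, ← hl1, ← hl2, ← hl11, ← hl12, ← hl112]
    refine mul_left_cancel₀ (mul_ne_zero ha ha') ?_
    have hre : (a * a') * (-(2 * a / a') * l11 * (a * A₁ + a' * A₂))
        = -2 * a * a * (a * A₁ + a' * A₂) * l11 := by
      field_simp
    rw [hre]
    linear_combination (2 * (a * A₁ + a' * A₂) - 2 * a' * a' * (a * A₁ + a' * A₂)) * E1
      + (2 * a' * a' * (a * A₁ + a' * A₂) * l12) * hnorm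
  · -- case 2 : n₁ ≤ i < n₁ + n₂ - 1
    intro i h1 h2
    have hii₀ : i ≠ i₀ := by intro h; rw [h] at h1; omega
    have hiiN : i ≠ iN := by intro h; rw [h] at h2; omega
    rw [master i i, hdqeb (am 0) i i, hdqeb (bm 0) i i,
      sum_mul_eb (fun k => da i k + da k i) i, sum_mul_eb (fun k => db i k + db k i) i,
      hdqY (am 0) i, hdqY (bm 0) i, hsumYd da i, hsumYd db i, hDs_val, hDt_val,
      ham0d2 i h1, hbm0d1 i h1,
      ham0od i i₀ hii₀, ham0od i₀ i (Ne.symm hii₀),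
      ham0od i iN hiiN, ham0od iN i (Ne.symm hiiN),
      hbm0od i i₀ hii₀, hbm0od i₀ i (Ne.symm hii₀),
      hbm0od i iN hiiN, hbm0od iN i (Ne.symm hiiN),
      hdab i i, hdbii i]
    simp only [hswp, hQ1, hsw1, hsw2, hQ2, ← hl1, ← hl2, ← hl11, ← hl12, ← hl112]
    refine mul_left_cancel₀ ha' ?_
    have hre : a' * (-(2 * a / a') * l12 * (a * A₁ + a' * A₂))
        = -2 * a * (a * A₁ + a' * A₂) * l12 := by
      field_simp
    rw [hre]
    linear_combination (2 * a * (a * A₁ + a' * A₂)) * E2'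
      + (-2 * a * (a * A₁ + a' * A₂) * l12) * hnorm
  · -- case 3 : (i₀, i₀)
    rw [master i₀ i₀, hdqeb (am 0) i₀ i₀, hdqeb (bm 0) i₀ i₀,
      sum_mul_eb (fun k => da i₀ k + da k i₀) i₀, sum_mul_eb (fun k => db i₀ k + db k i₀) i₀,
      hdqY (am 0) i₀, hdqY (bm 0) i₀, hsumYd da i₀, hsumYd db i₀, hDs_val, hDt_val,
      ea1, ea2, ea3, eb1, eb2, eb3,
      hdab i₀ i₀, hdab i₀ iN, hdab iN i₀, hdbii i₀, hdbC, hdbC2]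
    simp only [hswp, hQ1, hsw1, hsw2, hQ2, ← hl1, ← hl2, ← hl11, ← hl12, ← hl112]
    refine mul_left_cancel₀ ha ?_
    have hre : a * ((4 * a * a' * l112 + (2 * a' ^ 3 / a + 6 * a * a') * l12) * (a * A₁ + a' * A₂))
        = 2 * a' * a' * a' * (a * A₁ + a' * A₂) * l12 + 4 * a * a * a' * (a * A₁ + a' * A₂) * l112
          + 6 * a * a * a' * (a * A₁ + a' * A₂) * l12 := by
      field_simp
      ring
    rw [hre]
    linear_combination (-2 * a' * (a * A₁ + a' * A₂)) * E1
      + (-4 * a * a * a' * (a * A₁ + a' * A₂)) * E3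
      + (4 * a * a * a' * (a * A₁ + a' * A₂) * l112) * hnorm
  · -- case 4 : (iN, iN)
    rw [master iN iN, hdqeb (am 0) iN iN, hdqeb (bm 0) iN iN,
      sum_mul_eb (fun k => da iN k + da k iN) iN, sum_mul_eb (fun k => db iN k + db k iN) iN,
      hdqY (am 0) iN, hdqY (bm 0) iN, hsumYd da iN, hsumYd db iN, hDs_val, hDt_val,
      ea2, ea3, ea4, eb2, eb3, eb4,
      hdab iN iN, hdab i₀ iN, hdab iN i₀, hdbii iN, hdbC, hdbC2]
    simp only [hswp, hQ1, hsw1, hsw2, hQ2, ← hl1, ← hl2, ← hl11, ← hl12, ← hl112]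
    refine mul_left_cancel₀ ha' ?_
    have hre : a' * (((4 * a ^ 3 / a') * l112
          + (4 * a / a' - 6 * a * a' - 2 * a ^ 3 / a') * l12) * (a * A₁ + a' * A₂))
        = 4 * a * (a * A₁ + a' * A₂) * l12 - 6 * a * a' * a' * (a * A₁ + a' * A₂) * l12
          + 4 * a * a * a * (a * A₁ + a' * A₂) * l112 - 2 * a * a * a * (a * A₁ + a' * A₂) * l12 := by
      field_simp
      ring
    rw [hre]
    linear_combination (2 * a * (a * A₁ + a' * A₂)) * E2'
      + (-4 * a * a' * a' * (a * A₁ + a' * A₂) - 4 * a * a * a * (a * A₁ + a' * A₂)) * E4'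
      + (4 * a * a' * a' * (a * A₁ + a' * A₂)) * E5'
      + (4 * a * (a * A₁ + a' * A₂) * l12 + 4 * a * a * a * (a * A₁ + a' * A₂) * l112) * hnorm
  · -- case 5 : (i₀, iN)
    rw [master i₀ iN, hdqeb (am 0) i₀ iN, hdqeb (bm 0) i₀ iN,
      sum_mul_eb (fun k => da iN k + da k iN) i₀, sum_mul_eb (fun k => db iN k + db k iN) i₀,
      hdqY (am 0) i₀, hdqY (bm 0) i₀, hdqY (am 0) iN, hdqY (bm 0) iN,
      hsumYd da i₀, hsumYd db i₀, hsumYd da iN, hsumYd db iN, hDs_val, hDt_val,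
      ea1, ea2, ea3, ea4, eb1, eb2, eb3, eb4,
      hdab i₀ i₀, hdab i₀ iN, hdab iN i₀, hdab iN iN, hdbii i₀, hdbii iN, hdbC, hdbC2]
    simp only [hswp, hQ1, hsw1, hsw2, hQ2, ← hl1, ← hl2, ← hl11, ← hl12, ← hl112]
    linear_combination (-2 * (a * A₁ + a' * A₂)) * E1
      + (2 * (a * A₁ + a' * A₂)) * E2'
      + (4 * a * a * (a * A₁ + a' * A₂)) * E4'
      + (-4 * a * a * (a * A₁ + a' * A₂) * l112) * hnorm
end
end

section
/- Assume n₁ ≥ 2 (so n ≥ 3). For every nonzero vector y = (y¹,y²,0,…,0,y^n) ∈ ℝ^n (i.e. y^i = 0 for 3 ≤ i ≤ n−1), the Hessian satisfies g_{ij}(y) = 0 whenever i ≠ j and not both i,j lie in {1,2,n}; the same vanishing holds for the inverse matrix entries g^{ij}(y). -/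
noncomputable section

open Matrix MeasureTheory

/-- The `(α₁,α₂)`-norm `F(y) = √(L(α₁², α₂²))` on `ℝ^(n₁+n₂)`, where
`α₁² = Σ_{i ≤ n₁} (yⁱ)²` and `α₂² = Σ_{i > n₁} (yⁱ)²`. -/
def Fa (n₁ n₂ : ℕ) (L : ℝ × ℝ → ℝ) : (Fin (n₁ + n₂) → ℝ) → ℝ :=
  fun y => Real.sqrt (L (∑ i, if i.val < n₁ then y i ^ 2 else 0,
                         ∑ i, if n₁ ≤ i.val then y i ^ 2 else 0))

/-- The linear map flipping the sign of the `k`-th coordinate. -/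
def flipL (n : ℕ) (k : Fin n) : (Fin n → ℝ) →ₗ[ℝ] (Fin n → ℝ) :=
  LinearMap.pi fun i => (if i = k then (-1 : ℝ) else 1) • LinearMap.proj i

lemma flipL_apply (n : ℕ) (k : Fin n) (z : Fin n → ℝ) (i : Fin n) :
    flipL n k z i = (if i = k then (-1 : ℝ) else 1) * z i := rfl

lemma flipL_flipL (n : ℕ) (k : Fin n) :
    (flipL n k).comp (flipL n k) = LinearMap.id := by
  apply LinearMap.ext
  intro z
  funext i
  simp only [LinearMap.comp_apply, flipL_apply, LinearMap.id_apply]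
  split_ifs <;> ring

/-- The continuous linear equivalence flipping the sign of the `k`-th coordinate. -/
def flipE (n : ℕ) (k : Fin n) : (Fin n → ℝ) ≃L[ℝ] (Fin n → ℝ) :=
  (LinearEquiv.ofLinear (flipL n k) (flipL n k) (flipL_flipL n k)
    (flipL_flipL n k)).toContinuousLinearEquiv

lemma flipE_apply (n : ℕ) (k : Fin n) (z : Fin n → ℝ) (i : Fin n) :
    flipE n k z i = (if i = k then (-1 : ℝ) else 1) * z i := rfl

lemma flipE_eb (n : ℕ) (k : Fin n) (j : Fin n) :
    flipE n k (eb n j) = (if j = k then (-1 : ℝ) else 1) • eb n j := by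
  funext i
  rw [flipE_apply]
  simp only [eb, Pi.smul_apply, smul_eq_mul, Pi.single_apply]
  by_cases hij : i = j
  · subst hij; simp
  · simp [hij, Ne.symm hij]

lemma flipE_fix {n : ℕ} {k : Fin n} {y : Fin n → ℝ} (hy : y k = 0) :
    flipE n k y = y := by
  funext i
  rw [flipE_apply]
  split_ifs with h
  · subst h; simp [hy]
  · ring

/-- Key symmetry lemma: if `G` is invariant under flipping the `k`-th coordinate and
`y k = 0`, then second partials of `G` at `y` pick up a sign `ε i * ε j`. -/
lemma pd_pd_flip {n : ℕ} (k : Fin n) (G : (Fin n → ℝ) → ℝ)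
    (hG : ∀ z, G (flipE n k z) = G z) (y : Fin n → ℝ) (hy : y k = 0) (i j : Fin n) :
    pd (pd G j) i y =
      (if i = k then (-1 : ℝ) else 1) * pd (pd G j) i y *
        (if j = k then (-1 : ℝ) else 1) := by
  have hGc : G = G ∘ (flipE n k) := funext fun z => (hG z).symm
  -- Step 1: first partials transform with a sign.
  have h1 : ∀ z, pd G j z =
      (if j = k then (-1 : ℝ) else 1) * pd G j (flipE n k z) := by
    intro z
    unfold pd
    conv_lhs => rw [hGc]
    rw [ContinuousLinearEquiv.comp_right_fderiv]
    rw [ContinuousLinearMap.comp_apply, ContinuousLinearEquiv.coe_coe, flipE_eb,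
      _root_.map_smul, smul_eq_mul]
  have hcr : fderiv ℝ (fun z => pd G j (flipE n k z)) y =
      (fderiv ℝ (pd G j) (flipE n k y)).comp
        ((flipE n k : (Fin n → ℝ) →L[ℝ] (Fin n → ℝ))) := by
    have := ContinuousLinearEquiv.comp_right_fderiv (iso := flipE n k) (f := pd G j) (x := y)
    rwa [Function.comp_def] at this
  by_cases hj : j = k
  · have h2 : pd G j = fun z => -(pd G j (flipE n k z)) := by
      funext z; rw [h1 z, if_pos hj]; ring
    have key : pd (pd G j) i y =
        -((if i = k then (-1 : ℝ) else 1) * pd (pd G j) i y) := by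
      show fderiv ℝ (pd G j) y (eb n i) = _
      conv_lhs => rw [h2]
      rw [fderiv_fun_neg, ContinuousLinearMap.neg_apply, hcr, flipE_fix hy,
        ContinuousLinearMap.comp_apply, ContinuousLinearEquiv.coe_coe, flipE_eb,
        _root_.map_smul, smul_eq_mul]
      rfl
    rw [if_pos hj]
    conv_lhs => rw [key]
    ring
  · have h2 : pd G j = fun z => pd G j (flipE n k z) := by
      funext z; rw [h1 z, if_neg hj, one_mul]
    have key : pd (pd G j) i y =
        (if i = k then (-1 : ℝ) else 1) * pd (pd G j) i y := by
      show fderiv ℝ (pd G j) y (eb n i) = _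
      conv_lhs => rw [h2]
      rw [hcr, flipE_fix hy, ContinuousLinearMap.comp_apply,
        ContinuousLinearEquiv.coe_coe, flipE_eb, _root_.map_smul, smul_eq_mul]
      rfl
    rw [if_neg hj]
    conv_lhs => rw [key]
    ring

/-- The `(α₁,α₂)`-norm is invariant under flipping any coordinate sign. -/
lemma Fa_flip (n₁ n₂ : ℕ) (L : ℝ × ℝ → ℝ) (k : Fin (n₁ + n₂)) (z : Fin (n₁ + n₂) → ℝ) :
    Fa n₁ n₂ L (flipE (n₁ + n₂) k z) = Fa n₁ n₂ L z := by
  have hsq : ∀ i, (flipE (n₁ + n₂) k z i) ^ 2 = z i ^ 2 := by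
    intro i
    rw [flipE_apply]
    split_ifs <;> ring
  have e1 : (∑ i : Fin (n₁ + n₂), if (i : ℕ) < n₁ then flipE (n₁ + n₂) k z i ^ 2 else 0)
      = ∑ i : Fin (n₁ + n₂), if (i : ℕ) < n₁ then z i ^ 2 else 0 :=
    Finset.sum_congr rfl fun i _ => by rw [hsq i]
  have e2 : (∑ i : Fin (n₁ + n₂), if n₁ ≤ (i : ℕ) then flipE (n₁ + n₂) k z i ^ 2 else 0)
      = ∑ i : Fin (n₁ + n₂), if n₁ ≤ (i : ℕ) then z i ^ 2 else 0 :=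
    Finset.sum_congr rfl fun i _ => by rw [hsq i]
  unfold Fa
  rw [e1, e2]

/-- Matrix-level symmetry: the Hessian entry picks up the sign `ε a * ε b`. -/
lemma hess_flip_symm {n : ℕ} (k : Fin n) (F : (Fin n → ℝ) → ℝ)
    (hF : ∀ z, F (flipE n k z) = F z) (y : Fin n → ℝ) (hy : y k = 0) (a b : Fin n) :
    hess F y a b = (if a = k then (-1 : ℝ) else 1) * hess F y a b *
      (if b = k then (-1 : ℝ) else 1) := by
  have hG : ∀ z, (fun z => F z ^ 2) (flipE n k z) = (fun z => F z ^ 2) z := by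
    intro z; simp only; rw [hF]
  have h := pd_pd_flip k (fun z => F z ^ 2) hG y hy a b
  show (1 / 2 : ℝ) * pd (pd (fun z => F z ^ 2) b) a y = _
  conv_lhs => rw [h]
  show _ = (if a = k then (-1 : ℝ) else 1) *
      ((1 / 2 : ℝ) * pd (pd (fun z => F z ^ 2) b) a y) * (if b = k then (-1 : ℝ) else 1)
  ring

lemma hess_and_inv_zero {n : ℕ} (k : Fin n) (F : (Fin n → ℝ) → ℝ)
    (hF : ∀ z, F (flipE n k z) = F z) (y : Fin n → ℝ) (hy : y k = 0)
    {i j : Fin n} (hone : (i = k ∧ j ≠ k) ∨ (i ≠ k ∧ j = k)) :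
    hess F y i j = 0 ∧ (hess F y)⁻¹ i j = 0 := by
  have hAσ : hess F y = Matrix.diagonal (fun m => if m = k then (-1 : ℝ) else 1) *
      hess F y * Matrix.diagonal (fun m => if m = k then (-1 : ℝ) else 1) := by
    ext a b
    rw [Matrix.mul_diagonal, Matrix.diagonal_mul]
    exact hess_flip_symm k F hF y hy a b
  have hσσ : Matrix.diagonal (fun m => if m = k then (-1 : ℝ) else 1) *
      Matrix.diagonal (fun m => if m = k then (-1 : ℝ) else 1) = 1 := by
    rw [Matrix.diagonal_mul_diagonal]
    ext a b
    rw [Matrix.diagonal_apply, Matrix.one_apply]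
    split_ifs <;> norm_num
  have hσinv : (Matrix.diagonal (fun m => if m = k then (-1 : ℝ) else 1))⁻¹ =
      Matrix.diagonal (fun m => if m = k then (-1 : ℝ) else 1) :=
    Matrix.inv_eq_right_inv hσσ
  have hAinv : (hess F y)⁻¹ = Matrix.diagonal (fun m => if m = k then (-1 : ℝ) else 1) *
      (hess F y)⁻¹ * Matrix.diagonal (fun m => if m = k then (-1 : ℝ) else 1) := by
    conv_lhs => rw [hAσ]
    rw [Matrix.mul_inv_rev, Matrix.mul_inv_rev, hσinv, Matrix.mul_assoc]
  have hεij : (if i = k then (-1 : ℝ) else 1) * (if j = k then (-1 : ℝ) else 1) = -1 := by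
    rcases hone with ⟨hi, hj⟩ | ⟨hi, hj⟩ <;> simp [hi, hj]
  have h0 : ∀ x : ℝ,
      x = (if i = k then (-1 : ℝ) else 1) * x * (if j = k then (-1 : ℝ) else 1) → x = 0 := by
    intro x hx
    have hxx : x = -x := by
      calc x = (if i = k then (-1 : ℝ) else 1) * x * (if j = k then (-1 : ℝ) else 1) := hx
        _ = ((if i = k then (-1 : ℝ) else 1) * (if j = k then (-1 : ℝ) else 1)) * x := by ring
        _ = -x := by rw [hεij]; ring
    linarith
  constructor
  · exact h0 _ (hess_flip_symm k F hF y hy i j)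
  · refine h0 _ ?_
    conv_lhs => rw [hAinv]
    rw [Matrix.mul_diagonal, Matrix.diagonal_mul]

/-- n₁ ≥ 2: for a vector `y` supported in coordinates `1, 2, n`, the
fundamental tensor of an `(α₁,α₂)`-norm vanishes at every off-diagonal pair of indices not
both lying in `{1,2,n}`, and the same holds for its inverse. -/
theorem hess_vanishing_three_coords (n₁ n₂ : ℕ) (hn₁ : 2 ≤ n₁) (hn₂ : 1 ≤ n₂)
    (L : ℝ × ℝ → ℝ) (V : Set (ℝ × ℝ)) (hVopen : IsOpen V) (hVsub : quadrant ⊆ V)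
    (hLsm : ContDiffOn ℝ (⊤ : ℕ∞) L V) (hLpos : ∀ p ∈ V, 0 < L p)
    (hLhom : ∀ lam : ℝ, 0 < lam → ∀ p ∈ quadrant, L (lam * p.1, lam * p.2) = lam * L p)
    (hMink : IsMinkowskiNorm (Fa n₁ n₂ L)) :
    ∀ y : Fin (n₁ + n₂) → ℝ, y ≠ 0 →
      (∀ i : Fin (n₁ + n₂), (i : ℕ) ≠ 0 → (i : ℕ) ≠ 1 → (i : ℕ) ≠ n₁ + n₂ - 1 → y i = 0) →
      ∀ i j : Fin (n₁ + n₂), i ≠ j →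
        ¬(((i : ℕ) = 0 ∨ (i : ℕ) = 1 ∨ (i : ℕ) = n₁ + n₂ - 1) ∧
          ((j : ℕ) = 0 ∨ (j : ℕ) = 1 ∨ (j : ℕ) = n₁ + n₂ - 1)) →
        hess (Fa n₁ n₂ L) y i j = 0 ∧ (hess (Fa n₁ n₂ L) y)⁻¹ i j = 0 := by
  intro y _ hsupp i j hij hnot
  rw [not_and_or] at hnot
  rcases hnot with h | h
  · push_neg at h
    obtain ⟨h1, h2, h3⟩ := h
    have hyi : y i = 0 := hsupp i h1 h2 h3
    exact hess_and_inv_zero i (Fa n₁ n₂ L) (Fa_flip n₁ n₂ L i) y hyi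
      (Or.inl ⟨rfl, Ne.symm hij⟩)
  · push_neg at h
    obtain ⟨h1, h2, h3⟩ := h
    have hyj : y j = 0 := hsupp j h1 h2 h3
    exact hess_and_inv_zero j (Fa n₁ n₂ L) (Fa_flip n₁ n₂ L j) y hyj
      (Or.inr ⟨hij, rfl⟩)
end
end

section
/- For every vector y = (y¹,0,…,0,y^n) ∈ ℝ^n with y ≠ 0 (only the first and last coordinates possibly nonzero): ∂F²/∂x¹(0,y) = 2A₁·y¹y^n·( L₂((y¹)²,(y^n)²) − L₁((y¹)²,(y^n)²) ) and ∂F²/∂x^n(0,y) = 2A₂·y¹y^n·( L₂((y¹)²,(y^n)²) − L₁((y¹)²,(y^n)²) ), where L₁, L₂ denote the first partial derivatives of L evaluated at ((y¹)²,(y^n)²). -/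
noncomputable section

open Matrix MeasureTheory

lemma sum4 {m : ℕ} (M : Fin m → Fin m → ℝ) (c : Fin m → ℝ) (i₀ iN : Fin m) (hne : i₀ ≠ iN)
    (hc : ∀ k, k ≠ i₀ → k ≠ iN → c k = 0) :
    ∑ i, ∑ j, M i j * c i * c j =
      M i₀ i₀ * c i₀ * c i₀ + M i₀ iN * c i₀ * c iN
        + M iN i₀ * c iN * c i₀ + M iN iN * c iN * c iN := by
  have key : ∀ f : Fin m → ℝ, (∀ k, c k = 0 → f k = 0) → ∑ k, f k = f i₀ + f iN := by
    intro f hf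
    rw [← Finset.sum_pair hne]
    refine (Finset.sum_subset (Finset.subset_univ _) ?_).symm
    intro x _ hx
    simp only [Finset.mem_insert, Finset.mem_singleton, not_or] at hx
    exact hf x (hc x hx.1 hx.2)
  have inner : ∀ i, ∑ j, M i j * c i * c j = M i i₀ * c i * c i₀ + M i iN * c i * c iN :=
    fun i => key _ (fun k hk => by simp [hk])
  rw [show (∑ i, ∑ j, M i j * c i * c j)
      = ∑ i, (M i i₀ * c i * c i₀ + M i iN * c i * c iN) from
    Finset.sum_congr rfl fun i _ => inner i]
  rw [key _ (fun k hk => by simp [hk])]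
  ring

lemma hasFDerivAt_qform {m : ℕ} (M : (Fin m → ℝ) → Matrix (Fin m) (Fin m) ℝ)
    (c : Fin m → ℝ) (x₀ : Fin m → ℝ)
    (hM : ∀ i j, DifferentiableAt ℝ (fun x => M x i j) x₀) :
    HasFDerivAt (fun x => ∑ i, ∑ j, M x i j * c i * c j)
      (∑ i, ∑ j, (c i * c j) • fderiv ℝ (fun x => M x i j) x₀) x₀ := by
  refine HasFDerivAt.fun_sum fun i _ => HasFDerivAt.fun_sum fun j _ => ?_
  have h := ((hM i j).hasFDerivAt).mul_const (c i * c j)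
  simpa [mul_assoc] using h

/-- the horizontal derivatives of `F²` at `x = 0` along vectors
`y = (y¹,0,…,0,yⁿ)`. -/
theorem dxF_squared_on_plane (n₁ n₂ : ℕ) (hn₁ : 1 ≤ n₁) (hn₂ : 1 ≤ n₂)
    (L : ℝ × ℝ → ℝ) (V : Set (ℝ × ℝ)) (hVopen : IsOpen V) (hVsub : quadrant ⊆ V)
    (hLsm : ContDiffOn ℝ (⊤ : ℕ∞) L V) (hLpos : ∀ p ∈ V, 0 < L p)
    (hLhom : ∀ lam : ℝ, 0 < lam → ∀ p ∈ quadrant, L (lam * p.1, lam * p.2) = lam * L p)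
    (am bm : (Fin (n₁ + n₂) → ℝ) → Matrix (Fin (n₁ + n₂)) (Fin (n₁ + n₂)) ℝ)
    (U : Set (Fin (n₁ + n₂) → ℝ)) (hUopen : IsOpen U) (hU0 : (0 : Fin (n₁ + n₂) → ℝ) ∈ U)
    (hasym : ∀ x, (am x).IsSymm) (hbsym : ∀ x, (bm x).IsSymm)
    (hasm : ∀ i j, ContDiffOn ℝ (⊤ : ℕ∞) (fun x => am x i j) U)
    (hbsm : ∀ i j, ContDiffOn ℝ (⊤ : ℕ∞) (fun x => bm x i j) U)
    (ha0 : ∀ i j : Fin (n₁ + n₂), am 0 i j = if i = j ∧ (i : ℕ) < n₁ then 1 else 0)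
    (hb0 : ∀ i j : Fin (n₁ + n₂), bm 0 i j = if i = j ∧ n₁ ≤ (i : ℕ) then 1 else 0)
    (habd : ∀ i j k, pd (fun x => am x i j + bm x i j) k 0 = 0)
    (hMink : ∀ x ∈ U, IsMinkowskiNorm (FF (n₁ + n₂) L am bm x))
    (hbd : ∀ i j k : Fin (n₁ + n₂),
      (((i : ℕ) < n₁ ∧ (j : ℕ) < n₁) ∨ (n₁ ≤ (i : ℕ) ∧ n₁ ≤ (j : ℕ))) →
      pd (fun x => bm x i j) k 0 = 0)
    (i₀ iN : Fin (n₁ + n₂)) (hi₀ : (i₀ : ℕ) = 0) (hiN : (iN : ℕ) = n₁ + n₂ - 1)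
    (A₁ A₂ : ℝ) (hA₁ : A₁ = pd (fun x => bm x i₀ iN) i₀ 0)
    (hA₂ : A₂ = pd (fun x => bm x i₀ iN) iN 0)
    : ∀ y1 yn : ℝ, ¬(y1 = 0 ∧ yn = 0) →
      ∀ yc : Fin (n₁ + n₂) → ℝ,
        yc = (fun i => if i = i₀ then y1 else if i = iN then yn else 0) →
        pd (fun x => (FF (n₁ + n₂) L am bm x yc) ^ 2) i₀ 0
          = 2 * A₁ * y1 * yn * (D2 L (y1 ^ 2, yn ^ 2) - D1 L (y1 ^ 2, yn ^ 2)) ∧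
        pd (fun x => (FF (n₁ + n₂) L am bm x yc) ^ 2) iN 0
          = 2 * A₂ * y1 * yn * (D2 L (y1 ^ 2, yn ^ 2) - D1 L (y1 ^ 2, yn ^ 2)) := by
  intro y1 yn hy yc hyc
  have hne : i₀ ≠ iN := by
    intro h
    rw [h] at hi₀
    omega
  have hi₀lt : (i₀ : ℕ) < n₁ := by omega
  have hiNge : n₁ ≤ (iN : ℕ) := by omega
  have hci : yc i₀ = y1 := by rw [hyc]; simp
  have hcN : yc iN = yn := by rw [hyc]; simp [Ne.symm hne]
  have hcz : ∀ k, k ≠ i₀ → k ≠ iN → yc k = 0 := by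
    intro k h1 h2; rw [hyc]; simp [h1, h2]
  have hda : ∀ i j, DifferentiableAt ℝ (fun x => am x i j) 0 := fun i j =>
    ((hasm i j).contDiffAt (hUopen.mem_nhds hU0)).differentiableAt (by simp)
  have hdb : ∀ i j, DifferentiableAt ℝ (fun x => bm x i j) 0 := fun i j =>
    ((hbsm i j).contDiffAt (hUopen.mem_nhds hU0)).differentiableAt (by simp)
  have hα := hasFDerivAt_qform am yc 0 hda
  have hβ := hasFDerivAt_qform bm yc 0 hdb
  have hα0 : (∑ i, ∑ j, am 0 i j * yc i * yc j) = y1 ^ 2 := by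
    rw [sum4 (am 0) yc i₀ iN hne hcz, hci, hcN]
    have e1 : am 0 i₀ i₀ = 1 := by rw [ha0]; simp [hi₀lt]
    have e2 : am 0 i₀ iN = 0 := by rw [ha0]; simp [hne]
    have e3 : am 0 iN i₀ = 0 := by rw [ha0]; simp [Ne.symm hne]
    have e4 : am 0 iN iN = 0 := by rw [ha0]; simp [Nat.not_lt.mpr hiNge]
    rw [e1, e2, e3, e4]; ring
  have hβ0 : (∑ i, ∑ j, bm 0 i j * yc i * yc j) = yn ^ 2 := by
    rw [sum4 (bm 0) yc i₀ iN hne hcz, hci, hcN]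
    have e1 : bm 0 i₀ i₀ = 0 := by rw [hb0]; simp [Nat.not_le.mpr hi₀lt]
    have e2 : bm 0 i₀ iN = 0 := by rw [hb0]; simp [hne]
    have e3 : bm 0 iN i₀ = 0 := by rw [hb0]; simp [Ne.symm hne]
    have e4 : bm 0 iN iN = 1 := by rw [hb0]; simp [hiNge]
    rw [e1, e2, e3, e4]; ring
  have hab : ∀ i j k, fderiv ℝ (fun x => am x i j) 0 (eb (n₁ + n₂) k)
      = - fderiv ℝ (fun x => bm x i j) 0 (eb (n₁ + n₂) k) := by
    intro i j k
    have h := habd i j k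
    unfold pd at h
    rw [fderiv_fun_add (hda i j) (hdb i j)] at h
    rw [ContinuousLinearMap.add_apply] at h
    linarith
  have evalq : ∀ (M : (Fin (n₁ + n₂) → ℝ) → Matrix (Fin (n₁ + n₂)) (Fin (n₁ + n₂)) ℝ)
      (k : Fin (n₁ + n₂)),
      (∑ i, ∑ j, (yc i * yc j) • fderiv ℝ (fun x => M x i j) 0) (eb (n₁ + n₂) k)
        = ∑ i, ∑ j, (fderiv ℝ (fun x => M x i j) 0 (eb (n₁ + n₂) k)) * yc i * yc j := by
    intro M k
    rw [ContinuousLinearMap.sum_apply]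
    refine Finset.sum_congr rfl fun i _ => ?_
    rw [ContinuousLinearMap.sum_apply]
    refine Finset.sum_congr rfl fun j _ => ?_
    rw [ContinuousLinearMap.smul_apply, smul_eq_mul]
    ring
  have dsym : (fun x => bm x iN i₀) = (fun x => bm x i₀ iN) :=
    funext fun x => (hbsym x).apply i₀ iN
  have hBβ : ∀ k : Fin (n₁ + n₂),
      (∑ i, ∑ j, (yc i * yc j) • fderiv ℝ (fun x => bm x i j) 0) (eb (n₁ + n₂) k)
        = 2 * (fderiv ℝ (fun x => bm x i₀ iN) 0 (eb (n₁ + n₂) k)) * y1 * yn := by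
    intro k
    rw [evalq bm k,
      sum4 (fun i j => fderiv ℝ (fun x => bm x i j) 0 (eb (n₁ + n₂) k)) yc i₀ iN hne hcz,
      hci, hcN]
    have d1 : fderiv ℝ (fun x => bm x i₀ i₀) 0 (eb (n₁ + n₂) k) = 0 := by
      have := hbd i₀ i₀ k (Or.inl ⟨hi₀lt, hi₀lt⟩); unfold pd at this; exact this
    have d4 : fderiv ℝ (fun x => bm x iN iN) 0 (eb (n₁ + n₂) k) = 0 := by
      have := hbd iN iN k (Or.inr ⟨hiNge, hiNge⟩); unfold pd at this; exact this
    rw [d1, d4, dsym]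
    ring
  have hBα : ∀ k : Fin (n₁ + n₂),
      (∑ i, ∑ j, (yc i * yc j) • fderiv ℝ (fun x => am x i j) 0) (eb (n₁ + n₂) k)
        = -(2 * (fderiv ℝ (fun x => bm x i₀ iN) 0 (eb (n₁ + n₂) k)) * y1 * yn) := by
    intro k
    rw [evalq am k,
      sum4 (fun i j => fderiv ℝ (fun x => am x i j) 0 (eb (n₁ + n₂) k)) yc i₀ iN hne hcz,
      hci, hcN, hab i₀ i₀ k, hab i₀ iN k, hab iN i₀ k, hab iN iN k]
    have d1 : fderiv ℝ (fun x => bm x i₀ i₀) 0 (eb (n₁ + n₂) k) = 0 := by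
      have := hbd i₀ i₀ k (Or.inl ⟨hi₀lt, hi₀lt⟩); unfold pd at this; exact this
    have d4 : fderiv ℝ (fun x => bm x iN iN) 0 (eb (n₁ + n₂) k) = 0 := by
      have := hbd iN iN k (Or.inr ⟨hiNge, hiNge⟩); unfold pd at this; exact this
    rw [d1, d4, dsym]
    ring
  have hp0 : ((y1 ^ 2 : ℝ), (yn ^ 2 : ℝ)) ∈ V := by
    apply hVsub
    refine ⟨sq_nonneg _, sq_nonneg _, ?_⟩
    intro h
    rw [Prod.mk_eq_zero] at h
    exact hy ⟨pow_eq_zero_iff two_ne_zero |>.mp h.1, pow_eq_zero_iff two_ne_zero |>.mp h.2⟩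
  have hLd : HasFDerivAt L (fderiv ℝ L (y1 ^ 2, yn ^ 2)) (y1 ^ 2, yn ^ 2) :=
    (((hLsm.contDiffAt (hVopen.mem_nhds hp0)).differentiableAt (by simp))).hasFDerivAt
  have hlin : ∀ s t : ℝ, fderiv ℝ L (y1 ^ 2, yn ^ 2) (s, t)
      = s * D1 L (y1 ^ 2, yn ^ 2) + t * D2 L (y1 ^ 2, yn ^ 2) := by
    intro s t
    have hst : ((s, t) : ℝ × ℝ) = s • ((1 : ℝ), (0 : ℝ)) + t • ((0 : ℝ), (1 : ℝ)) := by
      simp [Prod.ext_iff]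
    rw [hst, map_add, _root_.map_smul, _root_.map_smul, D1, D2]
    simp [smul_eq_mul]
  have main : ∀ k : Fin (n₁ + n₂),
      pd (fun x => (FF (n₁ + n₂) L am bm x yc) ^ 2) k 0
        = 2 * pd (fun x => bm x i₀ iN) k 0 * y1 * yn
            * (D2 L (y1 ^ 2, yn ^ 2) - D1 L (y1 ^ 2, yn ^ 2)) := by
    intro k
    have hG : HasFDerivAt
        (fun x => ((∑ i, ∑ j, am x i j * yc i * yc j : ℝ),
          (∑ i, ∑ j, bm x i j * yc i * yc j : ℝ)))
        ((∑ i, ∑ j, (yc i * yc j) • fderiv ℝ (fun x => am x i j) 0).prod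
          (∑ i, ∑ j, (yc i * yc j) • fderiv ℝ (fun x => bm x i j) 0)) 0 := HasFDerivAt.prodMk hα hβ
    have hLd' : HasFDerivAt L (fderiv ℝ L (y1 ^ 2, yn ^ 2))
        (((∑ i, ∑ j, am (0 : Fin (n₁ + n₂) → ℝ) i j * yc i * yc j : ℝ),
          (∑ i, ∑ j, bm (0 : Fin (n₁ + n₂) → ℝ) i j * yc i * yc j : ℝ))) := by
      rw [hα0, hβ0]; exact hLd
    have hcomp : HasFDerivAt
        (fun x => L ((∑ i, ∑ j, am x i j * yc i * yc j : ℝ),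
          (∑ i, ∑ j, bm x i j * yc i * yc j : ℝ)))
        ((fderiv ℝ L (y1 ^ 2, yn ^ 2)).comp
          ((∑ i, ∑ j, (yc i * yc j) • fderiv ℝ (fun x => am x i j) 0).prod
            (∑ i, ∑ j, (yc i * yc j) • fderiv ℝ (fun x => bm x i j) 0))) 0 :=
      HasFDerivAt.comp 0 hLd' hG
    have hSopen : IsOpen (V ∩ L ⁻¹' Set.Ioi 0) :=
      hLsm.continuousOn.isOpen_inter_preimage hVopen isOpen_Ioi
    have hev : (fun x => ((∑ i, ∑ j, am x i j * yc i * yc j : ℝ),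
        (∑ i, ∑ j, bm x i j * yc i * yc j : ℝ))) ⁻¹' (V ∩ L ⁻¹' Set.Ioi 0)
          ∈ nhds (0 : Fin (n₁ + n₂) → ℝ) := by
      apply hG.differentiableAt.continuousAt.preimage_mem_nhds
      apply hSopen.mem_nhds
      rw [hα0, hβ0]
      exact ⟨hp0, hLpos _ hp0⟩
    have heq : (fun x => (FF (n₁ + n₂) L am bm x yc) ^ 2)
        =ᶠ[nhds (0 : Fin (n₁ + n₂) → ℝ)]
          (fun x => L ((∑ i, ∑ j, am x i j * yc i * yc j : ℝ),
            (∑ i, ∑ j, bm x i j * yc i * yc j : ℝ))) := by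
      filter_upwards [hev] with x hx
      simp only [FF]
      exact Real.sq_sqrt (le_of_lt hx.2)
    have hfd : fderiv ℝ (fun x => (FF (n₁ + n₂) L am bm x yc) ^ 2) 0
        = (fderiv ℝ L (y1 ^ 2, yn ^ 2)).comp
          ((∑ i, ∑ j, (yc i * yc j) • fderiv ℝ (fun x => am x i j) 0).prod
            (∑ i, ∑ j, (yc i * yc j) • fderiv ℝ (fun x => bm x i j) 0)) := by
      rw [heq.fderiv_eq, hcomp.fderiv]
    simp only [pd]
    rw [hfd]
    rw [ContinuousLinearMap.comp_apply, ContinuousLinearMap.prod_apply]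
    rw [hlin, hBα k, hBβ k]
    ring
  rw [hA₁, hA₂]
  exact ⟨main i₀, main iN⟩
end
end

section
/- Let F be a Minkowski norm on ℝ². Suppose that for every y ≠ 0 and every u ∈ ℝ² with Σ_{i,j} g_{ij}(y) y^i u^j = 0, the Cartan tensor vanishes on u: Σ_{i,j,k} ∂³(F²)/∂y^i∂y^j∂y^k(y) · u^i u^j u^k = 0. Then F is Euclidean: there exists a symmetric positive-definite 2×2 matrix Q such that F(y)² = Σ_{i,j} Q_{ij} y^i y^j for all y ∈ ℝ². -/
noncomputable section

open Matrix MeasureTheory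
open scoped ContDiff

namespace CartanAux

lemma eb_decomp (v : Fin 2 → ℝ) : v = v 0 • eb 2 0 + v 1 • eb 2 1 := by
  funext i; fin_cases i <;> simp [eb]

lemma clm_apply_eq (L : (Fin 2 → ℝ) →L[ℝ] ℝ) (v : Fin 2 → ℝ) :
    L v = v 0 * L (eb 2 0) + v 1 * L (eb 2 1) := by
  conv_lhs => rw [eb_decomp v]
  simp

lemma clm_eq_zero {L : (Fin 2 → ℝ) →L[ℝ] ℝ} (h0 : L (eb 2 0) = 0) (h1 : L (eb 2 1) = 0) :
    L = 0 := by
  apply ContinuousLinearMap.ext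
  intro v
  rw [clm_apply_eq L v, h0, h1]
  simp

lemma euler_pow {f : (Fin 2 → ℝ) → ℝ} {y : Fin 2 → ℝ} (n : ℕ)
    (hd : DifferentiableAt ℝ f y)
    (hhom : ∀ t : ℝ, 0 < t → f (t • y) = t ^ n * f y) :
    fderiv ℝ f y y = n * f y := by
  have hs : HasDerivAt (fun t : ℝ => t • y) y 1 := by
    simpa using (hasDerivAt_id (1 : ℝ)).smul_const y
  have hd' : HasFDerivAt f (fderiv ℝ f y) ((1 : ℝ) • y) := by
    rw [one_smul]; exact hd.hasFDerivAt
  have h1 : HasDerivAt (fun t : ℝ => f (t • y)) (fderiv ℝ f y y) 1 := by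
    exact hd'.comp_hasDerivAt 1 hs
  have h2 : HasDerivAt (fun t : ℝ => t ^ n * f y) ((n : ℝ) * f y) 1 := by
    simpa using (hasDerivAt_pow n (1 : ℝ)).mul_const (f y)
  have heq : (fun t : ℝ => f (t • y)) =ᶠ[nhds (1 : ℝ)] fun t => t ^ n * f y := by
    filter_upwards [eventually_gt_nhds (by norm_num : (0:ℝ) < 1)] with t ht
    exact hhom t ht
  exact (h1.congr_of_eventuallyEq heq.symm).unique h2

lemma fderiv_homog {f : (Fin 2 → ℝ) → ℝ}
    (hf : ∀ z : Fin 2 → ℝ, z ≠ 0 → DifferentiableAt ℝ f z) (n : ℕ)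
    (hhom : ∀ t : ℝ, 0 < t → ∀ z : Fin 2 → ℝ, z ≠ 0 → f (t • z) = t ^ (n + 1) * f z)
    {t : ℝ} (ht : 0 < t) {z : Fin 2 → ℝ} (hz : z ≠ 0) (v : Fin 2 → ℝ) :
    fderiv ℝ f (t • z) v = t ^ n * fderiv ℝ f z v := by
  have htz : t • z ≠ 0 := smul_ne_zero (ne_of_gt ht) hz
  have hlin : HasFDerivAt (fun w : Fin 2 → ℝ => t • w)
      (t • ContinuousLinearMap.id ℝ (Fin 2 → ℝ)) z := (hasFDerivAt_id z).const_smul t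
  have h1 : HasFDerivAt (fun w => f (t • w))
      ((fderiv ℝ f (t • z)).comp (t • ContinuousLinearMap.id ℝ (Fin 2 → ℝ))) z := by
    exact ((hf _ htz).hasFDerivAt.comp z hlin :)
  have heq : (fun w => f (t • w)) =ᶠ[nhds z] fun w => t ^ (n + 1) * f w := by
    filter_upwards [isOpen_compl_singleton.mem_nhds hz] with w hw
    exact hhom t ht w hw
  have h2 : fderiv ℝ (fun w => f (t • w)) z = t ^ (n + 1) • fderiv ℝ f z := by
    rw [heq.fderiv_eq]
    exact fderiv_const_mul (hf z hz) _
  have h3 := h1.fderiv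
  rw [h2] at h3
  have h4 := congrArg (fun L : (Fin 2 → ℝ) →L[ℝ] ℝ => L v) h3
  simp only [ContinuousLinearMap.smul_apply, ContinuousLinearMap.coe_comp',
    Function.comp_apply, ContinuousLinearMap.coe_smul', Pi.smul_apply,
    ContinuousLinearMap.coe_id', id_eq] at h4
  -- h4 : t^(n+1) * fderiv f z v = fderiv f (t•z) (t • v)  (or similar)
  have h5 : t ^ (n + 1) * fderiv ℝ f z v = t * fderiv ℝ f (t • z) v := by
    rw [smul_eq_mul] at h4
    rw [h4, (fderiv ℝ f (t • z)).map_smul]; simp [smul_eq_mul]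
  apply mul_left_cancel₀ (ne_of_gt ht)
  rw [← h5]; ring

lemma contDiffOn_pd {f : (Fin 2 → ℝ) → ℝ}
    (hf : ContDiffOn ℝ ∞ f {(0 : Fin 2 → ℝ)}ᶜ) (j : Fin 2) :
    ContDiffOn ℝ ∞ (pd f j) {(0 : Fin 2 → ℝ)}ᶜ := by
  have h := (contDiffOn_infty_iff_fderiv_of_isOpen isOpen_compl_singleton).1 hf
  exact h.2.clm_apply contDiffOn_const

lemma diffAt_of_contDiffOn {F' : Type*} [NormedAddCommGroup F'] [NormedSpace ℝ F']
    {f : (Fin 2 → ℝ) → F'}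
    (hf : ContDiffOn ℝ ∞ f {(0 : Fin 2 → ℝ)}ᶜ) {z : Fin 2 → ℝ} (hz : z ≠ 0) :
    DifferentiableAt ℝ f z := by
  have := (hf.contDiffAt (isOpen_compl_singleton.mem_nhds hz))
  exact this.differentiableAt (by simp)

lemma pd_pd_eq {f : (Fin 2 → ℝ) → ℝ} {x : Fin 2 → ℝ}
    (hf : DifferentiableAt ℝ (fderiv ℝ f) x) (i j : Fin 2) :
    pd (pd f j) i x = fderiv ℝ (fderiv ℝ f) x (eb 2 i) (eb 2 j) := by
  have h := (hf.hasFDerivAt.clm_apply (hasFDerivAt_const (eb 2 j) x)).fderiv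
  show fderiv ℝ (fun y => fderiv ℝ f y (eb 2 j)) x (eb 2 i) = _
  rw [h]
  simp

lemma pd_swap {f : (Fin 2 → ℝ) → ℝ} {x : Fin 2 → ℝ}
    (hsymm : IsSymmSndFDerivAt ℝ f x)
    (hd : DifferentiableAt ℝ (fderiv ℝ f) x) (i j : Fin 2) :
    pd (pd f j) i x = pd (pd f i) j x := by
  rw [pd_pd_eq hd, pd_pd_eq hd]
  exact hsymm _ _

lemma const_on_compl {f : (Fin 2 → ℝ) → ℝ}
    (hdiff : ∀ x : Fin 2 → ℝ, x ≠ 0 → DifferentiableAt ℝ f x)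
    (hzero : ∀ x : Fin 2 → ℝ, x ≠ 0 → fderiv ℝ f x = 0)
    {x y : Fin 2 → ℝ} (hx : x ≠ 0) (hy : y ≠ 0) : f x = f y := by
  set s : Set (Fin 2 → ℝ) := {(0 : Fin 2 → ℝ)}ᶜ with hsdef
  have hs : IsOpen s := isOpen_compl_singleton
  have hconn : IsPreconnected s := by
    have hrank : 1 < Module.rank ℝ (Fin 2 → ℝ) := by
      rw [rank_fin_fun]
      exact_mod_cast one_lt_two
    exact (isConnected_compl_singleton_of_one_lt_rank hrank 0).isPreconnected
  haveI : PreconnectedSpace s := Subtype.preconnectedSpace hconn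
  have hloc : IsLocallyConstant (fun z : s => f z.1) := by
    rw [IsLocallyConstant.iff_eventually_eq]
    intro ⟨a, ha⟩
    have hmem : s ∈ nhds a := hs.mem_nhds ha
    obtain ⟨r, hr, hball⟩ := Metric.mem_nhds_iff.1 hmem
    have hconst : ∀ z ∈ Metric.ball a r, f z = f a := by
      intro z hz
      refine (convex_ball a r).is_const_of_fderivWithin_eq_zero
        (fun w hw => (hdiff w (hball hw)).differentiableWithinAt) ?_ hz
        (Metric.mem_ball_self hr)
      intro w hw
      rw [fderivWithin_of_isOpen Metric.isOpen_ball hw]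
      exact hzero w (hball hw)
    have hev : ∀ᶠ z in nhds a, f z = f a :=
      Filter.eventually_of_mem (Metric.ball_mem_nhds a hr) hconst
    exact (continuous_subtype_val.tendsto (⟨a, ha⟩ : s)).eventually (p := fun z => f z = f a) hev
  exact hloc.apply_eq_of_preconnectedSpace ⟨x, hx⟩ ⟨y, hy⟩

lemma algebra2 (C : Fin 2 → Fin 2 → Fin 2 → ℝ) (y u : Fin 2 → ℝ)
    (hsym1 : ∀ i j k, C i j k = C j i k) (hsym2 : ∀ i j k, C i j k = C i k j)
    (heuler : ∀ j k, y 0 * C 0 j k + y 1 * C 1 j k = 0)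
    (hcub : C 0 0 0 * u 0 * u 0 * u 0 + C 0 0 1 * u 0 * u 0 * u 1
      + C 0 1 0 * u 0 * u 1 * u 0 + C 0 1 1 * u 0 * u 1 * u 1
      + C 1 0 0 * u 1 * u 0 * u 0 + C 1 0 1 * u 1 * u 0 * u 1
      + C 1 1 0 * u 1 * u 1 * u 0 + C 1 1 1 * u 1 * u 1 * u 1 = 0)
    (hd : y 0 * u 1 - y 1 * u 0 ≠ 0) :
    ∀ i j k, C i j k = 0 := by
  set y0 := y 0; set y1 := y 1; set u0 := u 0; set u1 := u 1
  set c0 := C 0 0 0 with hc0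
  set c1 := C 1 0 0 with hc1
  set c2 := C 1 1 0 with hc2
  set c3 := C 1 1 1 with hc3
  have e010 : C 0 1 0 = c1 := by rw [hsym1 0 1 0]
  have e001 : C 0 0 1 = c1 := by rw [hsym2 0 0 1, hsym1 0 1 0]
  have e101 : C 1 0 1 = c2 := by rw [hsym2 1 0 1]
  have e011 : C 0 1 1 = c2 := by rw [hsym1 0 1 1, hsym2 1 0 1]
  have E0 : y0 * c0 + y1 * c1 = 0 := heuler 0 0
  have E1 : y0 * c1 + y1 * c2 = 0 := by
    have := heuler 0 1; rwa [e001, e101] at this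
  have E2 : y0 * c2 + y1 * c3 = 0 := by
    have := heuler 1 1; rwa [e011] at this
  have U : c0 * u0 ^ 3 + 3 * c1 * u0 ^ 2 * u1 + 3 * c2 * u0 * u1 ^ 2 + c3 * u1 ^ 3 = 0 := by
    rw [e010, e001, e101, e011] at hcub; linarith [hcub]
  set d := y0 * u1 - y1 * u0 with hdd
  have hd3 : d ^ 3 ≠ 0 := pow_ne_zero 3 hd
  have hz0 : c0 = 0 := by
    have h : d ^ 3 * c0 = 0 := by
      linear_combination (y0 ^ 2 * u1 ^ 3 - 3 * y0 * y1 * u0 * u1 ^ 2 + 3 * y1 ^ 2 * u0 ^ 2 * u1) * E0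
        + (-(y0 * y1 * u1 ^ 3) + 3 * y1 ^ 2 * u0 * u1 ^ 2) * E1
        + (y1 ^ 2 * u1 ^ 3) * E2 + (-(y1 ^ 3)) * U
    exact (mul_eq_zero.1 h).resolve_left hd3
  have hz1 : c1 = 0 := by
    have h : d ^ 3 * c1 = 0 := by
      linear_combination (-(y1 ^ 2 * u0 ^ 3)) * E0
        + (y0 ^ 2 * u1 ^ 3 - 3 * y0 * y1 * u0 * u1 ^ 2) * E1
        + (-(y0 * y1 * u1 ^ 3)) * E2 + (y0 * y1 ^ 2) * U
    exact (mul_eq_zero.1 h).resolve_left hd3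
  have hz2 : c2 = 0 := by
    have h : d ^ 3 * c2 = 0 := by
      linear_combination (y0 * y1 * u0 ^ 3) * E0
        + (-(y1 ^ 2 * u0 ^ 3) + 3 * y0 * y1 * u0 ^ 2 * u1) * E1
        + (y0 ^ 2 * u1 ^ 3) * E2 + (-(y0 ^ 2 * y1)) * U
    exact (mul_eq_zero.1 h).resolve_left hd3
  have hz3 : c3 = 0 := by
    have h : d ^ 3 * c3 = 0 := by
      linear_combination (-(y0 ^ 2 * u0 ^ 3)) * E0
        + (y0 * y1 * u0 ^ 3 - 3 * y0 ^ 2 * u0 ^ 2 * u1) * E1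
        + (-(y1 ^ 2 * u0 ^ 3 - 3 * y0 * y1 * u0 ^ 2 * u1 + 3 * y0 ^ 2 * u0 * u1 ^ 2)) * E2
        + (y0 ^ 3) * U
    exact (mul_eq_zero.1 h).resolve_left hd3
  have f000 : C 0 0 0 = 0 := hz0
  have f100 : C 1 0 0 = 0 := hz1
  have f110 : C 1 1 0 = 0 := hz2
  have f111 : C 1 1 1 = 0 := hz3
  have f010 : C 0 1 0 = 0 := e010.trans hz1
  have f001 : C 0 0 1 = 0 := e001.trans hz1
  have f101 : C 1 0 1 = 0 := e101.trans hz2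
  have f011 : C 0 1 1 = 0 := e011.trans hz2
  intro i j k
  fin_cases i <;> fin_cases j <;> fin_cases k <;>
    simp [f000, f100, f110, f111, f010, f001, f101, f011]

lemma contDiffAt_two {F' : Type*} [NormedAddCommGroup F'] [NormedSpace ℝ F']
    {f : (Fin 2 → ℝ) → F'}
    (hf : ContDiffOn ℝ ∞ f {(0 : Fin 2 → ℝ)}ᶜ) {z : Fin 2 → ℝ} (hz : z ≠ 0) :
    ContDiffAt ℝ 2 f z := by
  have := hf.contDiffAt (isOpen_compl_singleton.mem_nhds hz)
  apply this.of_le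
  rw [show ((2 : WithTop ℕ∞)) = ((2 : ℕ∞) : WithTop ℕ∞) from rfl, WithTop.coe_le_coe]
  exact le_top

lemma diffAt_fderiv {f : (Fin 2 → ℝ) → ℝ}
    (hf : ContDiffOn ℝ ∞ f {(0 : Fin 2 → ℝ)}ᶜ) {z : Fin 2 → ℝ} (hz : z ≠ 0) :
    DifferentiableAt ℝ (fderiv ℝ f) z := by
  have h := ((contDiffOn_infty_iff_fderiv_of_isOpen isOpen_compl_singleton).1 hf).2
  exact diffAt_of_contDiffOn h hz

lemma eb_ne_zero (i : Fin 2) : eb 2 i ≠ 0 := by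
  intro h
  have := congrFun h i
  simp [eb] at this

end CartanAux

open CartanAux

/-- a Minkowski norm on `ℝ²` whose Cartan tensor vanishes on every vector
`u` that is `g_y`-orthogonal to `y` is Euclidean. -/


theorem two_dim_vanishing_cartan_euclidean (F : (Fin 2 → ℝ) → ℝ)
    (hF : IsMinkowskiNorm F)
    (hC : ∀ y : Fin 2 → ℝ, y ≠ 0 → ∀ u : Fin 2 → ℝ,
      (∑ i, ∑ j, hess F y i j * y i * u j) = 0 →
      (∑ i, ∑ j, ∑ k, pd (pd (pd (fun z => F z ^ 2) k) j) i y * u i * u j * u k) = 0) :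
    ∃ Q : Matrix (Fin 2) (Fin 2) ℝ, Q.IsSymm ∧ Q.PosDef ∧
      ∀ y : Fin 2 → ℝ, F y ^ 2 = ∑ i, ∑ j, Q i j * y i * y j := by
  classical
  set G : (Fin 2 → ℝ) → ℝ := fun z => F z ^ 2 with hGdef
  have hG : ContDiffOn ℝ ∞ G {(0 : Fin 2 → ℝ)}ᶜ := by
    rw [hGdef]; exact (hF.smooth.of_le (by simp)).pow 2
  have hpd1 : ∀ j, ContDiffOn ℝ ∞ (pd G j) {(0 : Fin 2 → ℝ)}ᶜ :=
    fun j => contDiffOn_pd hG j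
  have hpd2 : ∀ j k, ContDiffOn ℝ ∞ (pd (pd G k) j) {(0 : Fin 2 → ℝ)}ᶜ :=
    fun j k => contDiffOn_pd (hpd1 k) j
  -- homogeneity
  have hom0 : ∀ t : ℝ, 0 < t → ∀ z : Fin 2 → ℝ, z ≠ 0 → G (t • z) = t ^ (1 + 1) * G z := by
    intro t ht z _
    show F (t • z) ^ 2 = t ^ (1 + 1) * F z ^ 2
    rw [hF.homog t ht z]; ring
  have hom1 : ∀ j, ∀ t : ℝ, 0 < t → ∀ z : Fin 2 → ℝ, z ≠ 0 →
      pd G j (t • z) = t ^ (0 + 1) * pd G j z := by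
    intro j t ht z hz
    have := fderiv_homog (fun w hw => diffAt_of_contDiffOn hG hw) 1 hom0 ht hz (eb 2 j)
    simpa [pd] using this
  have hom2 : ∀ j k, ∀ t : ℝ, 0 < t → ∀ z : Fin 2 → ℝ, z ≠ 0 →
      pd (pd G k) j (t • z) = pd (pd G k) j z := by
    intro j k t ht z hz
    have := fderiv_homog (fun w hw => diffAt_of_contDiffOn (hpd1 k) hw) 0
      (hom1 k) ht hz (eb 2 j)
    simpa [pd] using this
  -- all third partial derivatives vanish
  have hthird : ∀ x : Fin 2 → ℝ, x ≠ 0 → ∀ i j k, pd (pd (pd G k) j) i x = 0 := by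
    intro x hx
    have heuler3 : ∀ j k, x 0 * pd (pd (pd G k) j) 0 x + x 1 * pd (pd (pd G k) j) 1 x = 0 := by
      intro j k
      have h := euler_pow 0 (diffAt_of_contDiffOn (hpd2 j k) hx)
        (fun t ht => by rw [hom2 j k t ht x hx]; simp)
      have h2 := clm_apply_eq (fderiv ℝ (pd (pd G k) j) x) x
      rw [h] at h2
      push_cast at h2
      simp only [zero_mul] at h2
      simp only [pd]
      linarith [h2]
    have hsym1 : ∀ i j k, pd (pd (pd G k) j) i x = pd (pd (pd G k) i) j x := by
      intro i j k
      exact pd_swap ((contDiffAt_two (hpd1 k) hx).isSymmSndFDerivAt (by simp))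
        (diffAt_fderiv (hpd1 k) hx) i j
    have hsym2 : ∀ i j k, pd (pd (pd G k) j) i x = pd (pd (pd G j) k) i x := by
      intro i j k
      have hev : (fun w => pd (pd G k) j w) =ᶠ[nhds x] (fun w => pd (pd G j) k w) := by
        filter_upwards [isOpen_compl_singleton.mem_nhds hx] with w hw
        exact pd_swap ((contDiffAt_two hG hw).isSymmSndFDerivAt (by simp))
          (diffAt_fderiv hG hw) j k
      show fderiv ℝ (pd (pd G k) j) x (eb 2 i) = fderiv ℝ (pd (pd G j) k) x (eb 2 i)
      rw [hev.fderiv_eq]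
    -- the orthogonal vector
    set g : Matrix (Fin 2) (Fin 2) ℝ := hess F x with hgdef
    set l : Fin 2 → ℝ := fun j => g 0 j * x 0 + g 1 j * x 1 with hldef
    set u : Fin 2 → ℝ := ![l 1, -l 0] with hudef
    have horth : (∑ i, ∑ j, hess F x i j * x i * u j) = 0 := by
      rw [← hgdef]
      simp only [Fin.sum_univ_two, hudef, Matrix.cons_val_zero, Matrix.cons_val_one,
        Matrix.head_cons, hldef]
      ring
    have hcub0 := hC x hx u horth
    have hpos : 0 < x 0 * l 0 + x 1 * l 1 := by
      have h := (hF.posdef x hx).dotProduct_mulVec_pos hx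
      simp only [dotProduct, Matrix.mulVec, Fin.sum_univ_two, star_trivial, Pi.star_apply,
        ← hgdef] at h
      simp only [hldef]
      nlinarith [h]
    have hd : x 0 * u 1 - x 1 * u 0 ≠ 0 := by
      have : x 0 * u 1 - x 1 * u 0 = -(x 0 * l 0 + x 1 * l 1) := by
        simp only [hudef, Matrix.cons_val_zero, Matrix.cons_val_one, Matrix.head_cons]; ring
      rw [this]
      exact ne_of_lt (by linarith)
    have hcub : pd (pd (pd G 0) 0) 0 x * u 0 * u 0 * u 0
        + pd (pd (pd G 1) 0) 0 x * u 0 * u 0 * u 1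
        + pd (pd (pd G 0) 1) 0 x * u 0 * u 1 * u 0
        + pd (pd (pd G 1) 1) 0 x * u 0 * u 1 * u 1
        + pd (pd (pd G 0) 0) 1 x * u 1 * u 0 * u 0
        + pd (pd (pd G 1) 0) 1 x * u 1 * u 0 * u 1
        + pd (pd (pd G 0) 1) 1 x * u 1 * u 1 * u 0
        + pd (pd (pd G 1) 1) 1 x * u 1 * u 1 * u 1 = 0 := by
      simp only [Fin.sum_univ_two] at hcub0
      linarith [hcub0]
    exact algebra2 (fun i j k => pd (pd (pd G k) j) i x) x u
      (fun i j k => hsym1 i j k) (fun i j k => hsym2 i j k)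
      heuler3 hcub hd
  -- hessian entries are constant on the complement of 0
  have hconst : ∀ x : Fin 2 → ℝ, x ≠ 0 → ∀ i j,
      pd (pd G j) i x = pd (pd G j) i (eb 2 0) := by
    intro x hx i j
    refine const_on_compl (f := pd (pd G j) i)
      (fun z hz => diffAt_of_contDiffOn (contDiffOn_pd (hpd1 j) i) hz) ?_ hx (eb_ne_zero 0)
    intro z hz
    refine clm_eq_zero ?_ ?_
    · exact hthird z hz 0 i j
    · exact hthird z hz 1 i j
  -- Euler identity : F x ^ 2 = ∑ hess
  have hmain : ∀ x : Fin 2 → ℝ, x ≠ 0 →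
      F x ^ 2 = ∑ i, ∑ j, hess F x i j * x i * x j := by
    intro x hx
    have hq : ∀ j, x 0 * pd (pd G j) 0 x + x 1 * pd (pd G j) 1 x = pd G j x := by
      intro j
      have hE := euler_pow 1 (diffAt_of_contDiffOn (hpd1 j) hx)
        (fun t ht => by rw [hom1 j t ht x hx])
      have hL := clm_apply_eq (fderiv ℝ (pd G j) x) x
      rw [hL] at hE
      push_cast at hE
      simp only [pd] at hE ⊢
      linarith [hE]
    have hE2 : x 0 * pd G 0 x + x 1 * pd G 1 x = 2 * F x ^ 2 := by
      have hE := euler_pow 2 (diffAt_of_contDiffOn hG hx)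
        (fun t ht => by
          have := hom0 t ht x hx
          rw [this])
      have hL := clm_apply_eq (fderiv ℝ G x) x
      rw [hL] at hE
      push_cast at hE
      have hGx : G x = F x ^ 2 := rfl
      rw [hGx] at hE
      simp only [pd] at hE ⊢
      linarith [hE]
    simp only [hess, Matrix.of_apply, Fin.sum_univ_two, ← hGdef]
    linear_combination (-(1 / 2) : ℝ) * hE2 + (-(1 / 2) : ℝ) * x 0 * hq 0 + (-(1 / 2) : ℝ) * x 1 * hq 1
  -- conclusion
  have heb0 : (eb 2 0 : Fin 2 → ℝ) ≠ 0 := eb_ne_zero 0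
  refine ⟨hess F (eb 2 0), ?_, hF.posdef _ heb0, ?_⟩
  · show (hess F (eb 2 0))ᵀ = hess F (eb 2 0)
    ext i j
    simp only [Matrix.transpose_apply, hess, Matrix.of_apply, ← hGdef]
    congr 1
    exact pd_swap ((contDiffAt_two hG heb0).isSymmSndFDerivAt (by simp))
      (diffAt_fderiv hG heb0) j i
  · intro z
    by_cases hz : z = 0
    · subst hz
      simp [hF.zero]
    · rw [hmain z hz]
      simp only [hess, Matrix.of_apply, Fin.sum_univ_two, ← hGdef]
      rw [hconst z hz 0 0, hconst z hz 0 1, hconst z hz 1 0, hconst z hz 1 1]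
end
end
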